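/- arXiv:2211.06252 — 15 statements merged into one kernel-verified Lean document; each statement's English description precedes it below -/
import Mathlib

section
/- Let H : ℝⁿ × ℝⁿ → ℝ be continuously differentiable and let γ : ℝⁿ → ℝⁿ be a continuously differentiable map whose Jacobian is symmetric at every point (i.e. ∂γᵢ/∂qʲ(q) = ∂γⱼ/∂qⁱ(q) for all q, i, j; γ is a closed 1-form). Write γ̂(q) = (q, γ(q)). Then the function q ↦ H(γ̂(q)) has vanishing derivative at every point of ℝⁿ if and only if for every q ∈ ℝⁿ and every index i one has ∂H/∂qⁱ(γ̂(q)) + Σⱼ ∂H/∂pⱼ(γ̂(q)) · ∂γᵢ/∂qʲ(q) = 0 (i.e. the Hamiltonian vector field X_H and the projected vector field X_H^γ are γ-related). -/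
/-- Partial derivative of `H` with respect to `qⁱ` at a point of phase space `ℝⁿ × ℝⁿ`. -/
noncomputable def partialQ {n : ℕ} (H : (Fin n → ℝ) × (Fin n → ℝ) → ℝ)
    (x : (Fin n → ℝ) × (Fin n → ℝ)) (i : Fin n) : ℝ :=
  fderiv ℝ H x (Pi.single i 1, 0)

/-- Partial derivative of `H` with respect to `pᵢ` at a point of phase space `ℝⁿ × ℝⁿ`. -/
noncomputable def partialP {n : ℕ} (H : (Fin n → ℝ) × (Fin n → ℝ) → ℝ)
    (x : (Fin n → ℝ) × (Fin n → ℝ)) (i : Fin n) : ℝ :=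
  fderiv ℝ H x (0, Pi.single i 1)

lemma single_decomp {n : ℕ} (v : Fin n → ℝ) :
    ∑ i, v i • (Pi.single i 1 : Fin n → ℝ) = v := by
  ext k
  simp [Finset.sum_apply, Pi.single_apply]

lemma apply_eq_sum {n : ℕ} (ℓ : (Fin n → ℝ) →L[ℝ] ℝ) (v : Fin n → ℝ) :
    ℓ v = ∑ i, v i * ℓ (Pi.single i 1) := by
  conv_lhs => rw [← single_decomp v]
  rw [map_sum]
  simp [smul_eq_mul]

lemma key_deriv {n : ℕ} (H : (Fin n → ℝ) × (Fin n → ℝ) → ℝ) (hH : ContDiff ℝ 1 H)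
    (γ : (Fin n → ℝ) → (Fin n → ℝ)) (hγ : ContDiff ℝ 1 γ) (q : Fin n → ℝ) (v : Fin n → ℝ) :
    fderiv ℝ (fun q => H (q, γ q)) q v =
      fderiv ℝ H (q, γ q) (v, 0) + ∑ j, fderiv ℝ γ q v j * fderiv ℝ H (q, γ q) (0, Pi.single j 1) := by
  have hg : HasFDerivAt (fun q : Fin n → ℝ => (q, γ q))
      ((ContinuousLinearMap.id ℝ (Fin n → ℝ)).prod (fderiv ℝ γ q)) q :=
    HasFDerivAt.prodMk (hasFDerivAt_id q) ((hγ.differentiable one_ne_zero q).hasFDerivAt)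
  have hc : HasFDerivAt (fun q => H (q, γ q))
      ((fderiv ℝ H (q, γ q)).comp ((ContinuousLinearMap.id ℝ (Fin n → ℝ)).prod (fderiv ℝ γ q))) q :=
    ((hH.differentiable one_ne_zero (q, γ q)).hasFDerivAt).comp q hg
  rw [hc.fderiv]
  have : ((v, fderiv ℝ γ q v) : (Fin n → ℝ) × (Fin n → ℝ)) = (v, 0) + (0, fderiv ℝ γ q v) := by
    simp
  simp only [ContinuousLinearMap.comp_apply, ContinuousLinearMap.prod_apply,
    ContinuousLinearMap.id_apply, this, map_add]
  congr 1
  exact apply_eq_sum ((fderiv ℝ H (q, γ q)).comp (ContinuousLinearMap.inr ℝ _ _)) (fderiv ℝ γ q v)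

/-- The Hamilton–Jacobi equation `d(H ∘ γ) = 0` holds iff the Hamiltonian vector field
`X_H` and the projected vector field `X_H^γ` are `γ`-related. -/
theorem hamilton_jacobi_iff_gamma_related {n : ℕ}
    (H : (Fin n → ℝ) × (Fin n → ℝ) → ℝ) (hH : ContDiff ℝ 1 H)
    (γ : (Fin n → ℝ) → (Fin n → ℝ)) (hγ : ContDiff ℝ 1 γ)
    (hsym : ∀ (q : Fin n → ℝ) (i j : Fin n),
      fderiv ℝ γ q (Pi.single j 1) i = fderiv ℝ γ q (Pi.single i 1) j) :
    (∀ q : Fin n → ℝ, fderiv ℝ (fun q => H (q, γ q)) q = 0) ↔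
      (∀ (q : Fin n → ℝ) (i : Fin n),
        partialQ H (q, γ q) i
          + ∑ j, partialP H (q, γ q) j * fderiv ℝ γ q (Pi.single j 1) i = 0) := by
  have keyI : ∀ (q : Fin n → ℝ) (i : Fin n),
      fderiv ℝ (fun q => H (q, γ q)) q (Pi.single i 1) =
        partialQ H (q, γ q) i
          + ∑ j, partialP H (q, γ q) j * fderiv ℝ γ q (Pi.single j 1) i := by
    intro q i
    rw [key_deriv H hH γ hγ q (Pi.single i 1)]
    unfold partialQ partialP
    congr 1
    apply Finset.sum_congr rfl
    intro j _
    rw [hsym q i j, mul_comm]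
  constructor
  · intro h q i
    rw [← keyI q i, h q]
    rfl
  · intro h q
    ext v
    rw [key_deriv H hH γ hγ q v, ContinuousLinearMap.zero_apply]
    have hv : fderiv ℝ H (q, γ q) (v, 0) = ∑ i, v i * partialQ H (q, γ q) i := by
      have := apply_eq_sum ((fderiv ℝ H (q, γ q)).comp (ContinuousLinearMap.inl ℝ _ _)) v
      simpa [partialQ] using this
    have hw : ∀ j, fderiv ℝ γ q v j = ∑ i, v i * fderiv ℝ γ q (Pi.single i 1) j := by
      intro j
      have := apply_eq_sum ((ContinuousLinearMap.proj j).comp (fderiv ℝ γ q)) v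
      simpa using this
    calc fderiv ℝ H (q, γ q) (v, 0)
          + ∑ j, fderiv ℝ γ q v j * fderiv ℝ H (q, γ q) (0, Pi.single j 1)
        = ∑ i, v i * (partialQ H (q, γ q) i
            + ∑ j, partialP H (q, γ q) j * fderiv ℝ γ q (Pi.single j 1) i) := by
          rw [hv]
          simp only [hw, mul_add, Finset.mul_sum, Finset.sum_add_distrib]
          congr 1
          rw [Finset.sum_comm]
          apply Finset.sum_congr rfl
          intro i _
          rw [Finset.sum_mul]
          apply Finset.sum_congr rfl
          intro k _
          simp only [partialP]
          rw [hsym q i k]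
          ring
      _ = 0 := by simp [h q]
end

section
/- Let H : ℝⁿ × ℝⁿ → ℝ be continuously differentiable and let γ : ℝⁿ → ℝⁿ be continuously differentiable with symmetric Jacobian at every point, and suppose the Hamilton–Jacobi equation holds: the map q ↦ H(q, γ(q)) has vanishing derivative everywhere. Then for every differentiable curve σ : I → ℝⁿ defined on an open interval I satisfying σ'(t) = ∂H/∂p(σ(t), γ(σ(t))) for all t ∈ I, the lifted curve t ↦ (σ(t), γ(σ(t))) satisfies Hamilton's equations: d/dt σᵢ(t) = ∂H/∂pᵢ(σ(t), γ(σ(t))) and d/dt γᵢ(σ(t)) = −∂H/∂qⁱ(σ(t), γ(σ(t))) for all t ∈ I and all i. -/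
lemma clm_snd_sum {n : ℕ} (L : ((Fin n → ℝ) × (Fin n → ℝ)) →L[ℝ] ℝ) (w : Fin n → ℝ) :
    L (0, w) = ∑ j, w j * L (0, Pi.single j 1) := by
  have hw : ((0, w) : (Fin n → ℝ) × (Fin n → ℝ))
      = ∑ j, w j • ((0, Pi.single j 1) : (Fin n → ℝ) × (Fin n → ℝ)) := by
    apply Prod.ext
    · simp [Prod.fst_sum]
    · funext k
      simp [Prod.snd_sum, Finset.sum_apply, Pi.single_apply, Finset.sum_ite_eq']
  rw [hw, map_sum]
  refine Finset.sum_congr rfl fun j _ => ?_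
  rw [map_smul]
  simp [mul_comm]

lemma clm_pi_sum {n : ℕ} (A : (Fin n → ℝ) →L[ℝ] (Fin n → ℝ)) (w : Fin n → ℝ) (i : Fin n) :
    A w i = ∑ j, w j * A (Pi.single j 1) i := by
  have hw : w = ∑ j, w j • (Pi.single j 1 : Fin n → ℝ) := by
    funext k
    simp [Finset.sum_apply, Pi.single_apply, Finset.sum_ite_eq']
  conv_lhs => rw [hw]
  rw [map_sum]
  rw [Finset.sum_apply]
  refine Finset.sum_congr rfl fun j _ => ?_
  rw [map_smul]
  simp [mul_comm]

/-- If a closed 1-form `γ` solves the Hamilton–Jacobi equation `d(H ∘ γ) = 0`, then each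
integral curve `σ` of the projected vector field `X_H^γ` lifts to an integral curve
`t ↦ (σ t, γ (σ t))` of the Hamiltonian vector field `X_H`, i.e. the lifted curve
satisfies Hamilton's equations. -/
theorem hamilton_jacobi_lifts_integral_curves {n : ℕ}
    (H : (Fin n → ℝ) × (Fin n → ℝ) → ℝ) (hH : ContDiff ℝ 1 H)
    (γ : (Fin n → ℝ) → (Fin n → ℝ)) (hγ : ContDiff ℝ 1 γ)
    (hsym : ∀ (q : Fin n → ℝ) (i j : Fin n),
      fderiv ℝ γ q (Pi.single j 1) i = fderiv ℝ γ q (Pi.single i 1) j)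
    (hHJ : ∀ q : Fin n → ℝ, fderiv ℝ (fun q => H (q, γ q)) q = 0)
    (t₀ t_f : ℝ) (σ : ℝ → (Fin n → ℝ))
    (hσ : ∀ t ∈ Set.Ioo t₀ t_f,
      HasDerivAt σ (fun i => partialP H (σ t, γ (σ t)) i) t) :
    ∀ t ∈ Set.Ioo t₀ t_f, ∀ i : Fin n,
      HasDerivAt (fun s => σ s i) (partialP H (σ t, γ (σ t)) i) t ∧
      HasDerivAt (fun s => γ (σ s) i) (-(partialQ H (σ t, γ (σ t)) i)) t := by
  intro t ht i
  set x := (σ t, γ (σ t)) with hx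
  set v : Fin n → ℝ := fun i => partialP H x i with hv
  have hσt := hσ t ht
  set A := fderiv ℝ γ (σ t) with hA
  have hγd : HasFDerivAt γ A (σ t) := (hγ.differentiable one_ne_zero (σ t)).hasFDerivAt
  have hHd : HasFDerivAt H (fderiv ℝ H x) x := (hH.differentiable one_ne_zero x).hasFDerivAt
  constructor
  · have := (ContinuousLinearMap.proj (R := ℝ) (φ := fun _ : Fin n => ℝ) i).hasFDerivAt.comp_hasDerivAt t hσt
    exact this
  · -- derivative of γ ∘ σ
    have hcomp : HasDerivAt (fun s => γ (σ s)) (A v) t := hγd.comp_hasDerivAt t hσt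
    have hcompi : HasDerivAt (fun s => γ (σ s) i) (A v i) t := by
      have := (ContinuousLinearMap.proj (R := ℝ) (φ := fun _ : Fin n => ℝ) i).hasFDerivAt.comp_hasDerivAt t hcomp
      exact this
    have key : A v i = -(partialQ H x i) := by
      -- chain rule for q ↦ H (q, γ q)
      have hg : HasFDerivAt (fun q : Fin n → ℝ => (q, γ q))
          ((ContinuousLinearMap.id ℝ (Fin n → ℝ)).prod A) (σ t) :=
        (hasFDerivAt_id (σ t)).prodMk hγd
      have hch : HasFDerivAt (fun q => H (q, γ q))
          ((fderiv ℝ H x).comp ((ContinuousLinearMap.id ℝ (Fin n → ℝ)).prod A)) (σ t) :=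
        hHd.comp (σ t) hg
      have h0 : (fderiv ℝ H x).comp ((ContinuousLinearMap.id ℝ (Fin n → ℝ)).prod A) = 0 := by
        rw [← hch.fderiv]; exact hHJ (σ t)
      have h0i : fderiv ℝ H x (Pi.single i 1, A (Pi.single i 1)) = 0 := by
        have := congrArg (fun L : (Fin n → ℝ) →L[ℝ] ℝ => L (Pi.single i 1)) h0
        simpa using this
      have hsplit : fderiv ℝ H x (Pi.single i 1, A (Pi.single i 1))
          = partialQ H x i + fderiv ℝ H x (0, A (Pi.single i 1)) := by
        rw [partialQ, ← map_add]
        congr 1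
        simp
      have hq : partialQ H x i = -(fderiv ℝ H x (0, A (Pi.single i 1))) := by
        linarith [hsplit.symm.trans h0i]
      rw [hq, neg_neg]
      rw [clm_pi_sum A v i, clm_snd_sum (fderiv ℝ H x) (A (Pi.single i 1))]
      apply Finset.sum_congr rfl
      intro j _
      rw [hv]
      simp only [partialP]
      rw [hA, hsym (σ t) j i]
      ring
    rw [key] at hcompi
    exact hcompi
end

section
/- Let H : ℝⁿ × ℝⁿ → ℝ be twice continuously differentiable and let γ : ℝⁿ → ℝⁿ be continuously differentiable with symmetric Jacobian at every point. Suppose that for every differentiable curve σ : I → ℝⁿ on an open interval satisfying σ'(t) = ∂H/∂p(σ(t), γ(σ(t))), the curve t ↦ (σ(t), γ(σ(t))) satisfies Hamilton's equations d/dt γᵢ(σ(t)) = −∂H/∂qⁱ(σ(t), γ(σ(t))). Then the derivative of the map q ↦ H(q, γ(q)) vanishes at every point of ℝⁿ. -/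
/-- Decomposition of a vector in `Fin n → ℝ` along the canonical basis. -/
lemma pi_decomp_single {n : ℕ} (w : Fin n → ℝ) :
    w = ∑ i, w i • (Pi.single i 1 : Fin n → ℝ) := by
  ext j
  simp [Finset.sum_apply, Pi.single_apply]

/-- A continuous linear map on `Fin n → ℝ` is determined by its values on the basis. -/
lemma clm_pi_decomp {n : ℕ} {M : Type*} [AddCommGroup M] [Module ℝ M]
    [TopologicalSpace M] [IsTopologicalAddGroup M] [ContinuousSMul ℝ M]
    (T : (Fin n → ℝ) →L[ℝ] M) (w : Fin n → ℝ) :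
    T w = ∑ i, w i • T (Pi.single i 1) := by
  conv_lhs => rw [pi_decomp_single w]
  rw [map_sum]
  simp

/-- Converse direction of the geometric Hamilton–Jacobi theorem: if every integral curve
of the projected vector field `X_H^γ` lifts via the closed 1-form `γ` to a curve
satisfying Hamilton's equations, then `γ` solves the Hamilton–Jacobi equation
`d(H ∘ γ) = 0`. -/
theorem integral_curves_lift_imp_hamilton_jacobi {n : ℕ}
    (H : (Fin n → ℝ) × (Fin n → ℝ) → ℝ) (hH : ContDiff ℝ 2 H)
    (γ : (Fin n → ℝ) → (Fin n → ℝ)) (hγ : ContDiff ℝ 1 γ)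
    (hsym : ∀ (q : Fin n → ℝ) (i j : Fin n),
      fderiv ℝ γ q (Pi.single j 1) i = fderiv ℝ γ q (Pi.single i 1) j)
    (hlift : ∀ (t₀ t_f : ℝ) (σ : ℝ → (Fin n → ℝ)),
      (∀ t ∈ Set.Ioo t₀ t_f,
        HasDerivAt σ (fun i => partialP H (σ t, γ (σ t)) i) t) →
      ∀ t ∈ Set.Ioo t₀ t_f, ∀ i : Fin n,
        HasDerivAt (fun s => γ (σ s) i) (-(partialQ H (σ t, γ (σ t)) i)) t) :
    ∀ q : Fin n → ℝ, fderiv ℝ (fun q => H (q, γ q)) q = 0 := by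
  classical
  intro q
  have hγd : Differentiable ℝ γ := hγ.differentiable one_ne_zero
  have hHd : Differentiable ℝ H := hH.differentiable two_ne_zero
  set F : (Fin n → ℝ) → (Fin n → ℝ) := fun x i => partialP H (x, γ x) i with hFdef
  have hF : ContDiff ℝ 1 F := by
    apply contDiff_pi.2
    intro i
    have h2 : ContDiff ℝ 1 (fun x : (Fin n → ℝ) × (Fin n → ℝ) => fderiv ℝ H x) :=
      hH.fderiv_right (by norm_num)
    have h1 : ContDiff ℝ 1
        (fun x : (Fin n → ℝ) × (Fin n → ℝ) => fderiv ℝ H x (0, Pi.single i 1)) :=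
      (ContinuousLinearMap.apply ℝ ℝ
        ((0, Pi.single i 1) : (Fin n → ℝ) × (Fin n → ℝ))).contDiff.comp h2
    exact h1.comp (contDiff_id.prodMk hγ)
  obtain ⟨σ, hσ0, ε, hε, hσ⟩ :=
    ContDiffAt.exists_forall_mem_closedBall_exists_eq_forall_mem_Ioo_hasDerivAt₀ (f := F) (x₀ := q) hF.contDiffAt 0
  have h0mem : (0 : ℝ) ∈ Set.Ioo (0 - ε) (0 + ε) := by
    constructor <;> simp [hε]
  have hHam : ∀ i : Fin n,
      HasDerivAt (fun s => γ (σ s) i) (-(partialQ H (q, γ q) i)) 0 := by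
    intro i
    have := hlift (0 - ε) (0 + ε) σ (fun t ht => hσ t ht) 0 h0mem i
    rwa [hσ0] at this
  have hchain : HasDerivAt (fun s => γ (σ s)) (fderiv ℝ γ (σ 0) (F (σ 0))) 0 :=
    ((hγd (σ 0)).hasFDerivAt).comp_hasDerivAt 0 (hσ 0 h0mem)
  rw [hσ0] at hchain
  have key : ∀ i : Fin n, fderiv ℝ γ q (F q) i = -(partialQ H (q, γ q) i) := fun i =>
    ((hasDerivAt_pi.1 hchain) i).unique (hHam i)
  set L := fderiv ℝ H (q, γ q) with hL
  set G := fderiv ℝ γ q with hG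
  have hcomp : fderiv ℝ (fun q => H (q, γ q)) q =
      L.comp ((ContinuousLinearMap.id ℝ (Fin n → ℝ)).prod G) :=
    HasFDerivAt.fderiv
      ((hHd (q, γ q)).hasFDerivAt.comp q ((hasFDerivAt_id q).prodMk (hγd q).hasFDerivAt))
  set S : (Fin n → ℝ) →L[ℝ] ℝ :=
    L.comp (ContinuousLinearMap.inr ℝ (Fin n → ℝ) (Fin n → ℝ)) with hS
  have hSapp : ∀ w, S w = L (0, w) := fun w => rfl
  -- the key identity, expanded
  have hkey2 : ∀ j : Fin n,
      ∑ i, partialP H (q, γ q) i * G (Pi.single i 1) j = -(partialQ H (q, γ q) j) := by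
    intro j
    have h := key j
    rw [clm_pi_decomp G (F q)] at h
    rw [Finset.sum_apply] at h
    simpa [smul_eq_mul] using h
  have hbasis : ∀ j : Fin n,
      L ((ContinuousLinearMap.id ℝ (Fin n → ℝ)).prod G (Pi.single j 1)) = 0 := by
    intro j
    have happ : ((ContinuousLinearMap.id ℝ (Fin n → ℝ)).prod G) (Pi.single j 1) =
        ((Pi.single j 1 : Fin n → ℝ), (0 : Fin n → ℝ)) + ((0 : Fin n → ℝ), G (Pi.single j 1)) := by
      simp [ContinuousLinearMap.prod_apply, Prod.ext_iff]
    rw [happ, map_add]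
    have h1 : L ((Pi.single j 1 : Fin n → ℝ), (0 : Fin n → ℝ)) = partialQ H (q, γ q) j := rfl
    have h2 : L ((0 : Fin n → ℝ), G (Pi.single j 1)) = S (G (Pi.single j 1)) := rfl
    rw [h1, h2, clm_pi_decomp S (G (Pi.single j 1))]
    have h3 : ∑ i, G (Pi.single j 1) i • S (Pi.single i 1)
        = ∑ i, partialP H (q, γ q) i * G (Pi.single i 1) j := by
      refine Finset.sum_congr rfl fun i _ => ?_
      rw [hSapp, smul_eq_mul, hsym q i j, mul_comm]
      rfl
    rw [h3, hkey2 j]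
    ring
  rw [hcomp]
  refine ContinuousLinearMap.ext fun v => ?_
  rw [ContinuousLinearMap.comp_apply]
  rw [clm_pi_decomp ((ContinuousLinearMap.id ℝ (Fin n → ℝ)).prod G) v, map_sum]
  simp only [map_smul, hbasis, smul_zero]
  simp
end

section
/- Let H : ℝⁿ × ℝⁿ → ℝ be continuously differentiable, let F : ℝⁿ × ℝⁿ → ℝⁿ be continuous (the components of a semibasic force 1-form F = Fᵢ dqⁱ), and let γ : ℝⁿ → ℝⁿ be continuously differentiable with symmetric Jacobian at every point. Suppose the forced Hamilton–Jacobi equation holds: for every q ∈ ℝⁿ and every i, ∂/∂qⁱ [H(q, γ(q))] = −Fᵢ(q, γ(q)). Then for every differentiable curve σ : I → ℝⁿ on an open interval satisfying σ'(t) = ∂H/∂p(σ(t), γ(σ(t))) for all t ∈ I, the lifted curve t ↦ (σ(t), γ(σ(t))) satisfies the forced Hamilton equations: d/dt σᵢ(t) = ∂H/∂pᵢ(σ(t), γ(σ(t))) and d/dt γᵢ(σ(t)) = −∂H/∂qⁱ(σ(t), γ(σ(t))) − Fᵢ(σ(t), γ(σ(t))). -/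
section

variable {ι : Type*} [Fintype ι] [DecidableEq ι]

theorem ContinuousLinearMap.map_eq_sum_single {R E : Type*} [Semiring R] [TopologicalSpace R]
    [AddCommMonoid E] [Module R E] [TopologicalSpace E] (L : (ι → R) →L[R] E) (v : ι → R) :
    L v = ∑ j, v j • L (Pi.single j 1) := by
  conv_lhs => rw [← Finset.univ_sum_single v]
  simp only [map_sum]
  refine Finset.sum_congr rfl fun j _ => ?_
  rw [← map_smul, ← Pi.single_smul', smul_eq_mul, mul_one]

theorem ContinuousLinearMap.map_prod_eq_add_sum_single {R E F : Type*} [Semiring R]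
    [TopologicalSpace R] [AddCommMonoid E] [Module R E] [TopologicalSpace E]
    [AddCommMonoid F] [Module R F] [TopologicalSpace F]
    (L : E × (ι → R) →L[R] F) (v : E) (w : ι → R) :
    L (v, w) = L (v, 0) + ∑ j, w j • L (0, Pi.single j 1) := by
  rw [show (v, w) = (v, 0) + (0, w) by simp, map_add]
  congr 1
  simpa using (L.comp (ContinuousLinearMap.inr R E (ι → R))).map_eq_sum_single w

theorem hasDerivAt_comp_apply_eq_sum {γ : (ι → ℝ) → (ι → ℝ)} {σ : ℝ → ι → ℝ}
    {σ' : ι → ℝ} {t : ℝ} (hγ : DifferentiableAt ℝ γ (σ t)) (hσ : HasDerivAt σ σ' t) (i : ι) :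
    HasDerivAt (fun s => γ (σ s) i) (∑ j, σ' j * fderiv ℝ γ (σ t) (Pi.single j 1) i) t := by
  have hcomp := hasDerivAt_pi.mp (hγ.hasFDerivAt.comp_hasDerivAt t hσ) i
  rwa [(fderiv ℝ γ (σ t)).map_eq_sum_single σ', Finset.sum_apply] at hcomp

end

theorem fderiv_graph_apply_single {n : ℕ} {H : (Fin n → ℝ) × (Fin n → ℝ) → ℝ}
    {γ : (Fin n → ℝ) → (Fin n → ℝ)} {q : Fin n → ℝ}
    (hH : DifferentiableAt ℝ H (q, γ q)) (hγ : DifferentiableAt ℝ γ q) (i : Fin n) :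
    fderiv ℝ (fun q => H (q, γ q)) q (Pi.single i 1) =
      partialQ H (q, γ q) i + ∑ j, fderiv ℝ γ q (Pi.single i 1) j * partialP H (q, γ q) j := by
  have hgraph : HasFDerivAt (fun q => H (q, γ q)) _ q :=
    hH.hasFDerivAt.comp q ((hasFDerivAt_id q).prodMk hγ.hasFDerivAt)
  rw [hgraph.fderiv, ContinuousLinearMap.comp_apply, ContinuousLinearMap.prod_apply,
    ContinuousLinearMap.id_apply, ContinuousLinearMap.map_prod_eq_add_sum_single]
  rfl

theorem forced_hamilton_jacobi_lifts_integral_curves_general {n : ℕ}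
    (H : (Fin n → ℝ) × (Fin n → ℝ) → ℝ) (hH : ContDiff ℝ 1 H)
    (F : (Fin n → ℝ) × (Fin n → ℝ) → (Fin n → ℝ))
    (γ : (Fin n → ℝ) → (Fin n → ℝ)) (hγ : ContDiff ℝ 1 γ)
    (hsym : ∀ (q : Fin n → ℝ) (i j : Fin n),
      fderiv ℝ γ q (Pi.single j 1) i = fderiv ℝ γ q (Pi.single i 1) j)
    (hHJ : ∀ (q : Fin n → ℝ) (i : Fin n),
      fderiv ℝ (fun q => H (q, γ q)) q (Pi.single i 1) = -(F (q, γ q) i))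
    (t₀ t_f : ℝ) (σ : ℝ → (Fin n → ℝ))
    (hσ : ∀ t ∈ Set.Ioo t₀ t_f,
      HasDerivAt σ (fun i => partialP H (σ t, γ (σ t)) i) t) :
    ∀ t ∈ Set.Ioo t₀ t_f, ∀ i : Fin n,
      HasDerivAt (fun s => σ s i) (partialP H (σ t, γ (σ t)) i) t ∧
      HasDerivAt (fun s => γ (σ s) i)
        (-(partialQ H (σ t, γ (σ t)) i) - F (σ t, γ (σ t)) i) t := by
  intro t ht i
  have hσt := hσ t ht
  have hγdiff := hγ.differentiable one_ne_zero
  refine ⟨hasDerivAt_pi.mp hσt i, ?_⟩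
  convert hasDerivAt_comp_apply_eq_sum (hγdiff (σ t)) hσt i using 1
  have hHJi := hHJ (σ t) i
  rw [fderiv_graph_apply_single (hH.differentiable one_ne_zero _) (hγdiff _)] at hHJi
  have hswap : ∑ j, partialP H (σ t, γ (σ t)) j * fderiv ℝ γ (σ t) (Pi.single j 1) i =
      ∑ j, fderiv ℝ γ (σ t) (Pi.single i 1) j * partialP H (σ t, γ (σ t)) j :=
    Finset.sum_congr rfl fun j _ => by rw [hsym (σ t) j i, mul_comm]
  rw [hswap]
  linarith

/-- Forced Hamilton–Jacobi theorem, lifting direction: if the closed 1-form `γ` solves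
the forced Hamilton–Jacobi equation `d(H ∘ γ) = −γ*F`, then every integral curve `σ`
of the projected vector field lifts via `γ` to a curve satisfying the forced Hamilton
equations. -/
theorem forced_hamilton_jacobi_lifts_integral_curves {n : ℕ}
    (H : (Fin n → ℝ) × (Fin n → ℝ) → ℝ) (hH : ContDiff ℝ 1 H)
    (F : (Fin n → ℝ) × (Fin n → ℝ) → (Fin n → ℝ)) (hF : Continuous F)
    (γ : (Fin n → ℝ) → (Fin n → ℝ)) (hγ : ContDiff ℝ 1 γ)
    (hsym : ∀ (q : Fin n → ℝ) (i j : Fin n),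
      fderiv ℝ γ q (Pi.single j 1) i = fderiv ℝ γ q (Pi.single i 1) j)
    (hHJ : ∀ (q : Fin n → ℝ) (i : Fin n),
      fderiv ℝ (fun q => H (q, γ q)) q (Pi.single i 1) = -(F (q, γ q) i))
    (t₀ t_f : ℝ) (σ : ℝ → (Fin n → ℝ))
    (hσ : ∀ t ∈ Set.Ioo t₀ t_f,
      HasDerivAt σ (fun i => partialP H (σ t, γ (σ t)) i) t) :
    ∀ t ∈ Set.Ioo t₀ t_f, ∀ i : Fin n,
      HasDerivAt (fun s => σ s i) (partialP H (σ t, γ (σ t)) i) t ∧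
      HasDerivAt (fun s => γ (σ s) i)
        (-(partialQ H (σ t, γ (σ t)) i) - F (σ t, γ (σ t)) i) t :=
  forced_hamilton_jacobi_lifts_integral_curves_general H hH F γ hγ hsym hHJ t₀ t_f σ hσ
end

section
/- Let H : ℝⁿ × ℝⁿ → ℝ be continuously differentiable, let F : ℝⁿ × ℝⁿ → ℝⁿ be continuous, and let γ : ℝⁿ → ℝⁿ be continuously differentiable with symmetric Jacobian at every point. Then the following are equivalent: (a) for every q and i, ∂/∂qⁱ [H(q, γ(q))] = −Fᵢ(q, γ(q)); (b) for every q and i, ∂H/∂qⁱ(q, γ(q)) + Fᵢ(q, γ(q)) + Σⱼ ∂H/∂pⱼ(q, γ(q)) · ∂γᵢ/∂qʲ(q) = 0 (i.e. the forced Hamiltonian vector field X_{H,F} and its projection along γ are γ-related). -/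
theorem fderiv_comp_graph {n : ℕ}
    (H : (Fin n → ℝ) × (Fin n → ℝ) → ℝ) (hH : ContDiff ℝ 1 H)
    (γ : (Fin n → ℝ) → (Fin n → ℝ)) (hγ : ContDiff ℝ 1 γ)
    (q : Fin n → ℝ) (i : Fin n) :
    fderiv ℝ (fun q => H (q, γ q)) q (Pi.single i 1)
      = partialQ H (q, γ q) i
        + ∑ j, partialP H (q, γ q) j * fderiv ℝ γ q (Pi.single i 1) j := by
  have hγd : HasFDerivAt γ (fderiv ℝ γ q) q :=
    (hγ.differentiable one_ne_zero q).hasFDerivAt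
  have hg : HasFDerivAt (fun q : Fin n → ℝ => (q, γ q))
      ((ContinuousLinearMap.id ℝ (Fin n → ℝ)).prod (fderiv ℝ γ q)) q :=
    HasFDerivAt.prodMk (hasFDerivAt_id q) hγd
  have hHd : HasFDerivAt H (fderiv ℝ H (q, γ q)) (q, γ q) :=
    (hH.differentiable one_ne_zero (q, γ q)).hasFDerivAt
  have hcomp := hHd.comp q hg
  have hcomp' : HasFDerivAt (fun q => H (q, γ q))
      ((fderiv ℝ H (q, γ q)).comp
        ((ContinuousLinearMap.id ℝ (Fin n → ℝ)).prod (fderiv ℝ γ q))) q := hcomp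
  rw [hcomp'.fderiv]
  set dH := fderiv ℝ H (q, γ q)
  set w := fderiv ℝ γ q (Pi.single i 1)
  have hw : ((0 : Fin n → ℝ), w)
      = ∑ j, w j • (((0 : Fin n → ℝ), (Pi.single j 1 : Fin n → ℝ))) := by
    ext k
    · simp [Prod.fst_sum]
    · simp [Prod.snd_sum, Finset.sum_apply, Pi.single_apply, mul_comm]
  have hsplit : dH ((Pi.single i 1 : Fin n → ℝ), w)
      = dH (Pi.single i 1, 0) + dH (0, w) := by
    rw [show ((Pi.single i 1 : Fin n → ℝ), w)
      = ((Pi.single i 1 : Fin n → ℝ), 0) + (0, w) by simp, map_add]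
  simp only [ContinuousLinearMap.comp_apply, ContinuousLinearMap.prod_apply,
    ContinuousLinearMap.id_apply]
  rw [show ((fderiv ℝ γ q) (Pi.single i 1)) = w from rfl, hsplit]
  congr 1
  rw [hw, map_sum]
  simp only [map_smul, smul_eq_mul]
  exact Finset.sum_congr rfl fun j _ => by rw [mul_comm]; rfl

/-- The forced Hamilton–Jacobi equation `d(H ∘ γ) = − γ*F` holds iff the forced
Hamiltonian vector field `X_{H,F}` and its projection along `γ` are `γ`-related. -/
theorem forced_hamilton_jacobi_iff_gamma_related {n : ℕ}
    (H : (Fin n → ℝ) × (Fin n → ℝ) → ℝ) (hH : ContDiff ℝ 1 H)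
    (F : (Fin n → ℝ) × (Fin n → ℝ) → (Fin n → ℝ)) (hF : Continuous F)
    (γ : (Fin n → ℝ) → (Fin n → ℝ)) (hγ : ContDiff ℝ 1 γ)
    (hsym : ∀ (q : Fin n → ℝ) (i j : Fin n),
      fderiv ℝ γ q (Pi.single j 1) i = fderiv ℝ γ q (Pi.single i 1) j) :
    (∀ (q : Fin n → ℝ) (i : Fin n),
      fderiv ℝ (fun q => H (q, γ q)) q (Pi.single i 1) = -(F (q, γ q) i)) ↔
    (∀ (q : Fin n → ℝ) (i : Fin n),
      partialQ H (q, γ q) i + F (q, γ q) i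
        + ∑ j, partialP H (q, γ q) j * fderiv ℝ γ q (Pi.single j 1) i = 0) := by
  have key : ∀ (q : Fin n → ℝ) (i : Fin n),
      fderiv ℝ (fun q => H (q, γ q)) q (Pi.single i 1)
        = partialQ H (q, γ q) i
          + ∑ j, partialP H (q, γ q) j * fderiv ℝ γ q (Pi.single j 1) i := by
    intro q i
    rw [fderiv_comp_graph H hH γ hγ q i]
    congr 1
    exact Finset.sum_congr rfl fun j _ => by rw [hsym q i j]
  constructor
  · intro h q i
    have := h q i
    rw [key q i] at this
    linarith
  · intro h q i
    have := h q i
    rw [key q i]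
    linarith
end

section
/- Let H : ℝⁿ × ℝⁿ → ℝ be continuously differentiable and Δ : ℝⁿ × ℝⁿ → ℝⁿ × ℝⁿ be a map (the impact map). Let γₖ, γₗ : ℝⁿ → ℝⁿ be continuously differentiable maps with symmetric Jacobians such that q ↦ H(q, γₖ(q)) and q ↦ H(q, γₗ(q)) have vanishing derivative everywhere. Let t₀ < t* < t_f and let c : (t₀, t_f) → ℝⁿ be a continuous curve, differentiable on (t₀, t*) and on (t*, t_f), satisfying c'(t) = ∂H/∂p(c(t), γₖ(c(t))) for t ∈ (t₀, t*), c'(t) = ∂H/∂p(c(t), γₗ(c(t))) for t ∈ (t*, t_f), and the impact condition (c(t*), γₗ(c(t*))) = Δ(c(t*), γₖ(c(t*))). Define x(t) = (c(t), γₖ(c(t))) for t < t* and x(t) = (c(t), γₗ(c(t))) for t ≥ t*. Then x satisfies Hamilton's equations q̇ = ∂H/∂p, ṗ = −∂H/∂q on (t₀, t*) and on (t*, t_f), and x(t*) = Δ(lim_{t → t*⁻} x(t)); that is, x is an integral curve of the hybrid dynamics. -/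
open Filter Topology

theorem LinearMap.apply_coords_eq_of_symmetric {R ι : Type*} [CommSemiring R] [Fintype ι]
    [DecidableEq ι] (D : (ι → R) →ₗ[R] ι → R)
    (hD : ∀ i j, D (Pi.single j 1) i = D (Pi.single i 1) j) (ℓ : (ι → R) →ₗ[R] R) (i : ι) :
    D (fun j => ℓ (Pi.single j 1)) i = ℓ (D (Pi.single i 1)) := by
  calc D (fun j => ℓ (Pi.single j 1)) i
      = ∑ j, ℓ (Pi.single j 1) * D (Pi.single j 1) i := by
        conv_lhs => rw [pi_eq_sum_univ' (fun j => ℓ (Pi.single j 1))]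
        simp only [map_sum, map_smul, Finset.sum_apply, Pi.smul_apply, smul_eq_mul]
    _ = ∑ j, D (Pi.single i 1) j * ℓ (Pi.single j 1) := by
        simp only [hD i, mul_comm]
    _ = ℓ (D (Pi.single i 1)) := by
        conv_rhs => rw [pi_eq_sum_univ' (D (Pi.single i 1))]
        simp only [map_sum, map_smul, smul_eq_mul]

theorem fderiv_apply_partialP_of_hamiltonJacobi {n : ℕ}
    {H : (Fin n → ℝ) × (Fin n → ℝ) → ℝ} {γ : (Fin n → ℝ) → (Fin n → ℝ)} {q : Fin n → ℝ}
    (hH : DifferentiableAt ℝ H (q, γ q)) (hγ : DifferentiableAt ℝ γ q)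
    (hsym : ∀ i j : Fin n, fderiv ℝ γ q (Pi.single j 1) i = fderiv ℝ γ q (Pi.single i 1) j)
    (hHJ : fderiv ℝ (fun q => H (q, γ q)) q = 0) (i : Fin n) :
    fderiv ℝ γ q (partialP H (q, γ q)) i = -partialQ H (q, γ q) i := by
  set L := fderiv ℝ H (q, γ q)
  set D := fderiv ℝ γ q
  have hchain : fderiv ℝ (fun q => H (q, γ q)) q = L.comp ((ContinuousLinearMap.id ℝ _).prod D) :=
    (hH.hasFDerivAt.comp q ((hasFDerivAt_id q).prodMk hγ.hasFDerivAt)).fderiv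
  have hHJ_i : L (Pi.single i 1, 0) + L (0, D (Pi.single i 1)) = 0 := by
    rw [← map_add, Prod.mk_add_mk, add_zero, zero_add]
    simpa [hchain] using congrArg (fun f => f (Pi.single i 1)) hHJ
  have hsym_i : D (partialP H (q, γ q)) i = L (0, D (Pi.single i 1)) :=
    LinearMap.apply_coords_eq_of_symmetric (D : (Fin n → ℝ) →ₗ[ℝ] Fin n → ℝ) hsym
      ((L : (Fin n → ℝ) × (Fin n → ℝ) →ₗ[ℝ] ℝ).comp (LinearMap.inr ℝ _ _)) i
  rw [hsym_i, partialQ]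
  linarith

theorem hamilton_of_eventuallyEq_lift {n : ℕ}
    {H : (Fin n → ℝ) × (Fin n → ℝ) → ℝ} {γ : (Fin n → ℝ) → (Fin n → ℝ)}
    {c : ℝ → (Fin n → ℝ)} {x : ℝ → (Fin n → ℝ) × (Fin n → ℝ)} {t : ℝ}
    (hH : DifferentiableAt ℝ H (c t, γ (c t))) (hγ : DifferentiableAt ℝ γ (c t))
    (hsym : ∀ i j : Fin n,
      fderiv ℝ γ (c t) (Pi.single j 1) i = fderiv ℝ γ (c t) (Pi.single i 1) j)
    (hHJ : fderiv ℝ (fun q => H (q, γ q)) (c t) = 0)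
    (hc : HasDerivAt c (partialP H (c t, γ (c t))) t)
    (hx : x =ᶠ[𝓝 t] fun s => (c s, γ (c s))) (i : Fin n) :
    HasDerivAt (fun s => (x s).1 i) (partialP H (x t) i) t ∧
      HasDerivAt (fun s => (x s).2 i) (-partialQ H (x t) i) t := by
  have hp : HasDerivAt (fun s => γ (c s) i) (-partialQ H (c t, γ (c t)) i) t := by
    rw [← fderiv_apply_partialP_of_hamiltonJacobi hH hγ hsym hHJ]
    exact hasDerivAt_pi.1 (hγ.hasFDerivAt.comp_hasDerivAt t hc) i
  rw [hx.eq_of_nhds]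
  exact ⟨(hasDerivAt_pi.1 hc i).congr_of_eventuallyEq (hx.fun_comp fun y => y.1 i),
    hp.congr_of_eventuallyEq (hx.fun_comp fun y => y.2 i)⟩

/-- Hybrid Hamilton–Jacobi theorem, implication (1) ⟹ (2), for a single impact: if the
closed 1-forms `γₖ, γₗ` solve the Hamilton–Jacobi equation and are `Δ`-related at the
impact point, then the piecewise lift `x` of any curve `c` tangent to the projected
vector fields is an integral curve of the hybrid dynamics: it satisfies Hamilton's
equations on `(t₀, t*)` and on `(t*, t_f)` and `x(t*) = Δ(lim_{t → t*⁻} x(t))`. -/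
theorem hybrid_hamilton_jacobi {n : ℕ}
    (H : (Fin n → ℝ) × (Fin n → ℝ) → ℝ) (hH : ContDiff ℝ 1 H)
    (Δ : (Fin n → ℝ) × (Fin n → ℝ) → (Fin n → ℝ) × (Fin n → ℝ))
    (γk γl : (Fin n → ℝ) → (Fin n → ℝ))
    (hγk : ContDiff ℝ 1 γk) (hγl : ContDiff ℝ 1 γl)
    (hsymk : ∀ (q : Fin n → ℝ) (i j : Fin n),
      fderiv ℝ γk q (Pi.single j 1) i = fderiv ℝ γk q (Pi.single i 1) j)
    (hsyml : ∀ (q : Fin n → ℝ) (i j : Fin n),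
      fderiv ℝ γl q (Pi.single j 1) i = fderiv ℝ γl q (Pi.single i 1) j)
    (hHJk : ∀ q : Fin n → ℝ, fderiv ℝ (fun q => H (q, γk q)) q = 0)
    (hHJl : ∀ q : Fin n → ℝ, fderiv ℝ (fun q => H (q, γl q)) q = 0)
    (t₀ ts t_f : ℝ) (ht₀ : t₀ < ts) (htf : ts < t_f)
    (c : ℝ → (Fin n → ℝ)) (hc : ContinuousOn c (Set.Ioo t₀ t_f))
    (hck : ∀ t ∈ Set.Ioo t₀ ts,
      HasDerivAt c (fun i => partialP H (c t, γk (c t)) i) t)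
    (hcl : ∀ t ∈ Set.Ioo ts t_f,
      HasDerivAt c (fun i => partialP H (c t, γl (c t)) i) t)
    (himpact : (c ts, γl (c ts)) = Δ (c ts, γk (c ts)))
    (x : ℝ → (Fin n → ℝ) × (Fin n → ℝ))
    (hx : ∀ t : ℝ, x t = if t < ts then (c t, γk (c t)) else (c t, γl (c t))) :
    (∀ t ∈ Set.Ioo t₀ ts, ∀ i : Fin n,
      HasDerivAt (fun s => (x s).1 i) (partialP H (x t) i) t ∧
      HasDerivAt (fun s => (x s).2 i) (-(partialQ H (x t) i)) t) ∧
    (∀ t ∈ Set.Ioo ts t_f, ∀ i : Fin n,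
      HasDerivAt (fun s => (x s).1 i) (partialP H (x t) i) t ∧
      HasDerivAt (fun s => (x s).2 i) (-(partialQ H (x t) i)) t) ∧
    (∃ xm : (Fin n → ℝ) × (Fin n → ℝ),
      Filter.Tendsto x (nhdsWithin ts (Set.Iio ts)) (nhds xm) ∧ x ts = Δ xm) := by
  have hHd := hH.differentiable one_ne_zero
  have hγkd := hγk.differentiable one_ne_zero
  have hγld := hγl.differentiable one_ne_zero
  refine ⟨fun t ht i => ?_, fun t ht i => ?_, (c ts, γk (c ts)), ?_, ?_⟩
  · refine hamilton_of_eventuallyEq_lift (hHd _) (hγkd _) (hsymk _) (hHJk _) (hck t ht) ?_ i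
    filter_upwards [Iio_mem_nhds ht.2] with s (hs : s < ts)
    rw [hx, if_pos hs]
  · refine hamilton_of_eventuallyEq_lift (hHd _) (hγld _) (hsyml _) (hHJl _) (hcl t ht) ?_ i
    filter_upwards [Ioi_mem_nhds ht.1] with s hs
    rw [hx, if_neg (not_lt.2 hs.le)]
  · have hcts : ContinuousAt c ts := hc.continuousAt (Ioo_mem_nhds ht₀ htf)
    refine (hcts.prodMk (hγk.continuous.continuousAt.comp hcts)).continuousWithinAt.congr' ?_
    filter_upwards [self_mem_nhdsWithin] with s (hs : s < ts)
    rw [hx, if_pos hs, Function.comp_apply]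
  · rw [hx, if_neg (lt_irrefl ts), himpact]
end

section
/- Let H : ℝⁿ × ℝⁿ → ℝ be continuously differentiable, F : ℝⁿ × ℝⁿ → ℝⁿ be continuous, and Δ : ℝⁿ × ℝⁿ → ℝⁿ × ℝⁿ be a map. Let γₖ, γₗ : ℝⁿ → ℝⁿ be continuously differentiable with symmetric Jacobians, satisfying the forced Hamilton–Jacobi equation ∂/∂qⁱ[H(q, γₘ(q))] = −Fᵢ(q, γₘ(q)) for m = k, l and all q, i. Let t₀ < t* < t_f and c : (t₀, t_f) → ℝⁿ be continuous, differentiable on (t₀, t*) and (t*, t_f), with c'(t) = ∂H/∂p(c(t), γₖ(c(t))) for t < t*, c'(t) = ∂H/∂p(c(t), γₗ(c(t))) for t > t*, and (c(t*), γₗ(c(t*))) = Δ(c(t*), γₖ(c(t*))). Define x(t) = (c(t), γₖ(c(t))) for t < t* and x(t) = (c(t), γₗ(c(t))) for t ≥ t*. Then x satisfies the forced Hamilton equations q̇ = ∂H/∂p, ṗ = −∂H/∂q − F on (t₀, t*) and on (t*, t_f), and x(t*) = Δ(lim_{t → t*⁻} x(t)). -/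
/-- Expansion of a continuous linear map on `Fin n → ℝ` over the standard basis. -/
lemma clm_expand {n : ℕ} {E : Type*} [NormedAddCommGroup E] [NormedSpace ℝ E]
    (L : (Fin n → ℝ) →L[ℝ] E) (w : Fin n → ℝ) :
    L w = ∑ j, w j • L (Pi.single j 1) := by
  conv_lhs => rw [← Finset.univ_sum_single w]
  rw [map_sum]
  refine Finset.sum_congr rfl fun j _ => ?_
  rw [← map_smul]
  congr 1
  ext k
  by_cases h : k = j <;> simp [Pi.single_apply, h]

/-- Core computation: the momentum component of the lift of `c` along a closed 1-form `γ`
solving the forced Hamilton–Jacobi equation satisfies Hamilton's second equation. -/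
lemma key_deriv_s7 {n : ℕ} (H : (Fin n → ℝ) × (Fin n → ℝ) → ℝ) (hH : ContDiff ℝ 1 H)
    (F : (Fin n → ℝ) × (Fin n → ℝ) → (Fin n → ℝ))
    (γ : (Fin n → ℝ) → (Fin n → ℝ)) (hγ : ContDiff ℝ 1 γ)
    (hsym : ∀ (q : Fin n → ℝ) (i j : Fin n),
      fderiv ℝ γ q (Pi.single j 1) i = fderiv ℝ γ q (Pi.single i 1) j)
    (hHJ : ∀ (q : Fin n → ℝ) (i : Fin n),
      fderiv ℝ (fun q => H (q, γ q)) q (Pi.single i 1) = -(F (q, γ q) i))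
    (c : ℝ → (Fin n → ℝ)) (t : ℝ)
    (hct : HasDerivAt c (fun i => partialP H (c t, γ (c t)) i) t) (i : Fin n) :
    HasDerivAt (fun s => γ (c s) i)
      (-(partialQ H (c t, γ (c t)) i) - F (c t, γ (c t)) i) t := by
  set q := c t with hq
  set v : Fin n → ℝ := fun i => partialP H (q, γ q) i with hv
  have hγd : HasFDerivAt γ (fderiv ℝ γ q) q := ((hγ.differentiable one_ne_zero) q).hasFDerivAt
  set A := fderiv ℝ γ q with hA
  have h1 : HasDerivAt (fun s => γ (c s)) (A v) t := hγd.comp_hasDerivAt t hct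
  have h2 : HasDerivAt (fun s => γ (c s) i) (A v i) t := hasDerivAt_pi.mp h1 i
  set DH := fderiv ℝ H (q, γ q) with hDH
  have hHd : HasFDerivAt H DH (q, γ q) := ((hH.differentiable one_ne_zero) _).hasFDerivAt
  have hpair : HasFDerivAt (fun q => (q, γ q))
      ((ContinuousLinearMap.id ℝ (Fin n → ℝ)).prod A) q := (hasFDerivAt_id q).prodMk hγd
  have hcomp : HasFDerivAt (fun q => H (q, γ q))
      (DH.comp ((ContinuousLinearMap.id ℝ (Fin n → ℝ)).prod A)) q := hHd.comp q hpair
  have hHJ' : DH (Pi.single i 1, A (Pi.single i 1)) = -(F (q, γ q) i) := by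
    have h := hHJ q i
    rw [hcomp.fderiv] at h
    simpa using h
  have hsplit : DH (Pi.single i 1, A (Pi.single i 1))
      = partialQ H (q, γ q) i + DH (0, A (Pi.single i 1)) := by
    have : ((Pi.single i 1 : Fin n → ℝ), A (Pi.single i 1))
        = (Pi.single i 1, 0) + ((0 : Fin n → ℝ), A (Pi.single i 1)) := by
      simp [Prod.ext_iff]
    rw [this, map_add]
    rfl
  have hL2 : ∀ w : Fin n → ℝ, DH (0, w) = ∑ j, w j * DH (0, Pi.single j 1) := by
    intro w
    have h := clm_expand (DH.comp (ContinuousLinearMap.inr ℝ (Fin n → ℝ) (Fin n → ℝ))) w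
    simpa [smul_eq_mul] using h
  have hval : A v i = DH (0, A (Pi.single i 1)) := by
    have hAv : A v i = ∑ j, v j * (A (Pi.single j 1)) i := by
      rw [clm_expand A v]
      simp [Finset.sum_apply]
    rw [hAv, hL2]
    refine Finset.sum_congr rfl fun j _ => ?_
    rw [hsym q i j]
    have hvj : v j = DH (0, Pi.single j 1) := rfl
    rw [hvj]
    ring
  have hfinal : A v i = -(partialQ H (q, γ q) i) - F (q, γ q) i := by
    rw [hval]
    have := hsplit
    rw [hHJ'] at this
    linarith
  rw [hfinal] at h2
  exact h2

/-- Forced hybrid Hamilton–Jacobi theorem, implication (1) ⟹ (2), for a single impact: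
if the closed 1-forms `γₖ, γₗ` solve the forced Hamilton–Jacobi equation
`d(H ∘ γ) = −γ*F` and are `Δ`-related at the impact point, then the piecewise lift `x`
of any curve `c` tangent to the projected vector fields satisfies the forced Hamilton
equations on `(t₀, t*)` and on `(t*, t_f)` and `x(t*) = Δ(lim_{t → t*⁻} x(t))`. -/
theorem forced_hybrid_hamilton_jacobi {n : ℕ}
    (H : (Fin n → ℝ) × (Fin n → ℝ) → ℝ) (hH : ContDiff ℝ 1 H)
    (F : (Fin n → ℝ) × (Fin n → ℝ) → (Fin n → ℝ)) (hF : Continuous F)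
    (Δ : (Fin n → ℝ) × (Fin n → ℝ) → (Fin n → ℝ) × (Fin n → ℝ))
    (γk γl : (Fin n → ℝ) → (Fin n → ℝ))
    (hγk : ContDiff ℝ 1 γk) (hγl : ContDiff ℝ 1 γl)
    (hsymk : ∀ (q : Fin n → ℝ) (i j : Fin n),
      fderiv ℝ γk q (Pi.single j 1) i = fderiv ℝ γk q (Pi.single i 1) j)
    (hsyml : ∀ (q : Fin n → ℝ) (i j : Fin n),
      fderiv ℝ γl q (Pi.single j 1) i = fderiv ℝ γl q (Pi.single i 1) j)
    (hHJk : ∀ (q : Fin n → ℝ) (i : Fin n),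
      fderiv ℝ (fun q => H (q, γk q)) q (Pi.single i 1) = -(F (q, γk q) i))
    (hHJl : ∀ (q : Fin n → ℝ) (i : Fin n),
      fderiv ℝ (fun q => H (q, γl q)) q (Pi.single i 1) = -(F (q, γl q) i))
    (t₀ ts t_f : ℝ) (ht₀ : t₀ < ts) (htf : ts < t_f)
    (c : ℝ → (Fin n → ℝ)) (hc : ContinuousOn c (Set.Ioo t₀ t_f))
    (hck : ∀ t ∈ Set.Ioo t₀ ts,
      HasDerivAt c (fun i => partialP H (c t, γk (c t)) i) t)
    (hcl : ∀ t ∈ Set.Ioo ts t_f,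
      HasDerivAt c (fun i => partialP H (c t, γl (c t)) i) t)
    (himpact : (c ts, γl (c ts)) = Δ (c ts, γk (c ts)))
    (x : ℝ → (Fin n → ℝ) × (Fin n → ℝ))
    (hx : ∀ t : ℝ, x t = if t < ts then (c t, γk (c t)) else (c t, γl (c t))) :
    (∀ t ∈ Set.Ioo t₀ ts, ∀ i : Fin n,
      HasDerivAt (fun s => (x s).1 i) (partialP H (x t) i) t ∧
      HasDerivAt (fun s => (x s).2 i) (-(partialQ H (x t) i) - F (x t) i) t) ∧
    (∀ t ∈ Set.Ioo ts t_f, ∀ i : Fin n,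
      HasDerivAt (fun s => (x s).1 i) (partialP H (x t) i) t ∧
      HasDerivAt (fun s => (x s).2 i) (-(partialQ H (x t) i) - F (x t) i) t) ∧
    (∃ xm : (Fin n → ℝ) × (Fin n → ℝ),
      Filter.Tendsto x (nhdsWithin ts (Set.Iio ts)) (nhds xm) ∧ x ts = Δ xm) := by
  refine ⟨?_, ?_, ?_⟩
  · intro t ht i
    have hlt : t < ts := ht.2
    have hxt : x t = (c t, γk (c t)) := by rw [hx t, if_pos hlt]
    have hmem : Set.Iio ts ∈ nhds t := Iio_mem_nhds hlt
    have heq1 : (fun s => (x s).1 i) =ᶠ[nhds t] (fun s => c s i) := by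
      filter_upwards [hmem] with s hs
      rw [hx s, if_pos (Set.mem_Iio.mp hs)]
    have heq2 : (fun s => (x s).2 i) =ᶠ[nhds t] (fun s => γk (c s) i) := by
      filter_upwards [hmem] with s hs
      rw [hx s, if_pos (Set.mem_Iio.mp hs)]
    constructor
    · have h := hasDerivAt_pi.mp (hck t ht) i
      rw [hxt]
      exact h.congr_of_eventuallyEq heq1
    · have h := key_deriv_s7 H hH F γk hγk hsymk hHJk c t (hck t ht) i
      rw [hxt]
      exact h.congr_of_eventuallyEq heq2
  · intro t ht i
    have hgt : ts < t := ht.1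
    have hxt : x t = (c t, γl (c t)) := by rw [hx t, if_neg (not_lt.mpr hgt.le)]
    have hmem : Set.Ioi ts ∈ nhds t := Ioi_mem_nhds hgt
    have heq1 : (fun s => (x s).1 i) =ᶠ[nhds t] (fun s => c s i) := by
      filter_upwards [hmem] with s hs
      rw [hx s, if_neg (not_lt.mpr (le_of_lt hs))]
    have heq2 : (fun s => (x s).2 i) =ᶠ[nhds t] (fun s => γl (c s) i) := by
      filter_upwards [hmem] with s hs
      rw [hx s, if_neg (not_lt.mpr (le_of_lt hs))]
    constructor
    · have h := hasDerivAt_pi.mp (hcl t ht) i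
      rw [hxt]
      exact h.congr_of_eventuallyEq heq1
    · have h := key_deriv_s7 H hH F γl hγl hsyml hHJl c t (hcl t ht) i
      rw [hxt]
      exact h.congr_of_eventuallyEq heq2
  · refine ⟨(c ts, γk (c ts)), ?_, ?_⟩
    · have hts : ts ∈ Set.Ioo t₀ t_f := ⟨ht₀, htf⟩
      have hcw : Filter.Tendsto c (nhdsWithin ts (Set.Ioo t₀ t_f)) (nhds (c ts)) :=
        hc.continuousWithinAt hts
      have hle : nhdsWithin ts (Set.Iio ts) ≤ nhdsWithin ts (Set.Ioo t₀ t_f) :=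
        nhdsWithin_le_of_mem (mem_nhdsWithin_of_mem_nhds (isOpen_Ioo.mem_nhds hts))
      have hc1 : Filter.Tendsto c (nhdsWithin ts (Set.Iio ts)) (nhds (c ts)) :=
        hcw.mono_left hle
      have hc2 : Filter.Tendsto (fun s => (c s, γk (c s)))
          (nhdsWithin ts (Set.Iio ts)) (nhds (c ts, γk (c ts))) :=
        hc1.prodMk_nhds ((hγk.continuous.tendsto (c ts)).comp hc1)
      refine hc2.congr' ?_
      filter_upwards [self_mem_nhdsWithin] with s hs
      rw [hx s, if_pos (Set.mem_Iio.mp hs)]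
    · rw [hx ts, if_neg (lt_irrefl ts)]
      exact himpact
end

section
/- Let H : ℝⁿ × ℝⁿ → ℝ be continuously differentiable and let μ¹, …, μᵏ : ℝⁿ → ℝⁿ be continuous maps (the constraint 1-forms) that are linearly independent at every point; let D_q = {v ∈ ℝⁿ : ⟨μᵃ(q), v⟩ = 0 for a = 1, …, k} be the constraint distribution. Let γ : ℝⁿ → ℝⁿ be continuously differentiable and suppose: (i) H(q, γ(q)) = E for all q and some constant E; (ii) ∂H/∂p(q, γ(q)) ∈ D_q for all q; and (iii) for all q and all v, w ∈ D_q, ⟨Dγ(q)v, w⟩ = ⟨Dγ(q)w, v⟩ (dγ vanishes on D × D). Then for every differentiable curve σ : I → ℝⁿ on an open interval with σ'(t) = ∂H/∂p(σ(t), γ(σ(t))), there exist functions λ₁, …, λₖ : I → ℝ such that the lifted curve t ↦ (σ(t), γ(σ(t))) satisfies the nonholonomic Hamilton equations: d/dt σ(t) = ∂H/∂p(σ(t), γ(σ(t))) ∈ D_{σ(t)} and d/dt γ(σ(t)) = −∂H/∂q(σ(t), γ(σ(t))) − Σₐ λₐ(t) μᵃ(σ(t)). -/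
/-- The constraint distribution `D_q` determined by constraint 1-forms `μ¹, …, μᵏ`. -/
def constraintDist {n k : ℕ} (μ : Fin k → (Fin n → ℝ) → (Fin n → ℝ))
    (q : Fin n → ℝ) : Set (Fin n → ℝ) :=
  {v | ∀ a : Fin k, ∑ i, μ a q i * v i = 0}

open scoped RealInnerProductSpace

/-- Expand a continuous linear functional on `Fin n → ℝ` over the standard basis. -/
lemma clm_expand_basis {n : ℕ} (f : (Fin n → ℝ) →L[ℝ] ℝ) (u : Fin n → ℝ) :
    f u = ∑ i, u i * f (Pi.single i 1) := by
  have h := LinearMap.pi_apply_eq_sum_univ (f : (Fin n → ℝ) →ₗ[ℝ] ℝ) u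
  have h2 : ∀ i : Fin n, (fun j => if i = j then (1:ℝ) else 0) = Pi.single i 1 := by
    intro i; funext j; simp [Pi.single_apply, eq_comm]
  simp only [h2, smul_eq_mul] at h
  exact h

/-- A vector orthogonal to the common kernel of the `μᵃ` lies in their span. -/
lemma mem_span_of_orth {n k : ℕ} (μv : Fin k → EuclideanSpace ℝ (Fin n))
    (w : EuclideanSpace ℝ (Fin n))
    (h : ∀ u : EuclideanSpace ℝ (Fin n), (∀ a, ⟪μv a, u⟫ = 0) → ⟪w, u⟫ = 0) :
    ∃ c : Fin k → ℝ, ∑ a, c a • μv a = w := by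
  have hmem : w ∈ Submodule.span ℝ (Set.range μv) := by
    rw [← Submodule.orthogonal_orthogonal (Submodule.span ℝ (Set.range μv))]
    intro u hu
    rw [real_inner_comm]
    exact h u fun a => hu (μv a) (Submodule.subset_span ⟨a, rfl⟩)
  exact (Submodule.mem_span_range_iff_exists_fun ℝ).mp hmem

theorem nhhj_aux {n k : ℕ}
    (H : (Fin n → ℝ) × (Fin n → ℝ) → ℝ) (hH : ContDiff ℝ 1 H)
    (μ : Fin k → (Fin n → ℝ) → (Fin n → ℝ))
    (γ : (Fin n → ℝ) → (Fin n → ℝ)) (hγ : ContDiff ℝ 1 γ)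
    (E : ℝ) (hHJ : ∀ q : Fin n → ℝ, H (q, γ q) = E)
    (hcompat : ∀ q : Fin n → ℝ, ∀ a, ∑ i, μ a q i * (fderiv ℝ H (q, γ q) (0, Pi.single i 1)) = 0)
    (hsymD : ∀ (q : Fin n → ℝ), ∀ v, (∀ a, ∑ i, μ a q i * v i = 0) → ∀ w, (∀ a, ∑ i, μ a q i * w i = 0) →
      ∑ i, fderiv ℝ γ q v i * w i = ∑ i, fderiv ℝ γ q w i * v i) :
    ∀ q : Fin n → ℝ, ∃ c : Fin k → ℝ, ∀ i,
      ∑ a, c a * μ a q i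
        = fderiv ℝ H (q, γ q) (Pi.single i 1, 0)
          + fderiv ℝ γ q (fun j => fderiv ℝ H (q, γ q) (0, Pi.single j 1)) i := by
  intro q
  set x := (q, γ q) with hx
  set L := fderiv ℝ H x with hL
  set v : Fin n → ℝ := fun j => L (0, Pi.single j 1) with hv
  set w : Fin n → ℝ := fun i => L (Pi.single i 1, 0) + fderiv ℝ γ q v i with hw
  -- chain rule: for all u, L (u, Dγ u) = 0
  have hγd : HasFDerivAt γ (fderiv ℝ γ q) q := (hγ.differentiable one_ne_zero q).hasFDerivAt
  have hΦ : HasFDerivAt (fun q' : Fin n → ℝ => (q', γ q'))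
      ((ContinuousLinearMap.id ℝ (Fin n → ℝ)).prod (fderiv ℝ γ q)) q :=
    HasFDerivAt.prodMk (hasFDerivAt_id q) hγd
  have h1 : HasFDerivAt H L x := (hH.differentiable one_ne_zero x).hasFDerivAt
  have hG : HasFDerivAt (fun q' : Fin n → ℝ => H (q', γ q'))
      (L.comp ((ContinuousLinearMap.id ℝ (Fin n → ℝ)).prod (fderiv ℝ γ q))) q :=
    h1.comp q hΦ
  have hG0 : HasFDerivAt (fun q' : Fin n → ℝ => H (q', γ q')) (0 : (Fin n → ℝ) →L[ℝ] ℝ) q := by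
    have he : (fun q' : Fin n → ℝ => H (q', γ q')) = fun _ => E := funext hHJ
    rw [he]; exact hasFDerivAt_const E q
  have hzero : ∀ u : Fin n → ℝ, L (u, fderiv ℝ γ q u) = 0 := by
    intro u
    have := DFunLike.congr_fun (hG.unique hG0) u
    simpa using this
  -- linearity expansion
  have hlin : ∀ u u' : Fin n → ℝ,
      L (u, u') = ∑ i, u i * L (Pi.single i 1, 0) + ∑ i, u' i * L (0, Pi.single i 1) := by
    intro u u'
    have h1 : (u, u') = ((u, 0) : (Fin n → ℝ) × (Fin n → ℝ)) + (0, u') := by simp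
    rw [h1, map_add]
    have e1 : L (u, (0 : Fin n → ℝ)) = ∑ i, u i * L (Pi.single i 1, 0) := by
      have := clm_expand_basis (L.comp (ContinuousLinearMap.inl ℝ (Fin n → ℝ) (Fin n → ℝ))) u
      simpa using this
    have e2 : L ((0 : Fin n → ℝ), u') = ∑ i, u' i * L (0, Pi.single i 1) := by
      have := clm_expand_basis (L.comp (ContinuousLinearMap.inr ℝ (Fin n → ℝ) (Fin n → ℝ))) u'
      simpa using this
    rw [e1, e2]
  -- v in the distribution
  have hvD : ∀ a, ∑ i, μ a q i * v i = 0 := hcompat q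
  -- orthogonality of w to the distribution
  have horth : ∀ u : Fin n → ℝ, (∀ a, ∑ i, μ a q i * u i = 0) → ∑ i, w i * u i = 0 := by
    intro u hu
    have h0 := hzero u
    rw [hlin u (fderiv ℝ γ q u)] at h0
    have hsym := hsymD q v hvD u hu
    have : ∑ i, w i * u i
        = ∑ i, u i * L (Pi.single i 1, 0) + ∑ i, fderiv ℝ γ q u i * L (0, Pi.single i 1) := by
      rw [hw]
      rw [← hsym]
      rw [← Finset.sum_add_distrib]
      congr 1; funext i; ring
    rw [this, h0]
  -- span membership via Euclidean space
  obtain ⟨c, hc⟩ := mem_span_of_orth (n := n) (k := k) (fun a => WithLp.toLp 2 (μ a q)) (WithLp.toLp 2 w) (by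
    intro u hu
    have hu' : ∀ a, ∑ i, μ a q i * u i = 0 := by
      intro a
      have := hu a
      simpa [PiLp.inner_apply, RCLike.inner_apply, mul_comm] using this
    have := horth u hu'
    simpa [PiLp.inner_apply, RCLike.inner_apply, mul_comm] using this)
  refine ⟨c, fun i => ?_⟩
  have hci : (∑ a, c a • WithLp.toLp 2 (μ a q)) i = w i := by rw [hc]
  have : ∑ a, c a * μ a q i = w i := by
    rw [← hci]
    simp [Finset.sum_apply, smul_eq_mul]
  rw [this]

/-- Nonholonomic Hamilton–Jacobi theorem (Ohsawa–Bloch), lifting direction: if `γ`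
satisfies `H ∘ γ = E`, takes values compatible with the constraints, and `dγ` vanishes
on `D × D`, then every integral curve `σ` of the projected vector field lifts via `γ`
to a curve satisfying the nonholonomic Hamilton equations with suitable Lagrange
multipliers `λₐ`. -/
theorem nonholonomic_hamilton_jacobi_lifts {n k : ℕ}
    (H : (Fin n → ℝ) × (Fin n → ℝ) → ℝ) (hH : ContDiff ℝ 1 H)
    (μ : Fin k → (Fin n → ℝ) → (Fin n → ℝ))
    (hμcont : ∀ a, Continuous (μ a))
    (hμindep : ∀ q : Fin n → ℝ, LinearIndependent ℝ (fun a : Fin k => μ a q))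
    (γ : (Fin n → ℝ) → (Fin n → ℝ)) (hγ : ContDiff ℝ 1 γ)
    (E : ℝ) (hHJ : ∀ q : Fin n → ℝ, H (q, γ q) = E)
    (hcompat : ∀ q : Fin n → ℝ,
      (fun i => partialP H (q, γ q) i) ∈ constraintDist μ q)
    (hsymD : ∀ (q : Fin n → ℝ), ∀ v ∈ constraintDist μ q, ∀ w ∈ constraintDist μ q,
      ∑ i, fderiv ℝ γ q v i * w i = ∑ i, fderiv ℝ γ q w i * v i)
    (t₀ t_f : ℝ) (σ : ℝ → (Fin n → ℝ))
    (hσ : ∀ t ∈ Set.Ioo t₀ t_f,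
      HasDerivAt σ (fun i => partialP H (σ t, γ (σ t)) i) t) :
    ∃ lam : Fin k → ℝ → ℝ, ∀ t ∈ Set.Ioo t₀ t_f,
      HasDerivAt σ (fun i => partialP H (σ t, γ (σ t)) i) t ∧
      (fun i => partialP H (σ t, γ (σ t)) i) ∈ constraintDist μ (σ t) ∧
      HasDerivAt (fun s => γ (σ s))
        (fun i => -(partialQ H (σ t, γ (σ t)) i)
          - ∑ a, lam a t * μ a (σ t) i) t := by
  have hcompat' : ∀ q : Fin n → ℝ, ∀ a,
      ∑ i, μ a q i * (fderiv ℝ H (q, γ q) (0, Pi.single i 1)) = 0 := by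
    intro q a
    have := hcompat q a
    simpa [partialP] using this
  have hsymD' : ∀ (q : Fin n → ℝ), ∀ v, (∀ a, ∑ i, μ a q i * v i = 0) →
      ∀ w, (∀ a, ∑ i, μ a q i * w i = 0) →
      ∑ i, fderiv ℝ γ q v i * w i = ∑ i, fderiv ℝ γ q w i * v i := by
    intro q v hv w hw
    exact hsymD q v hv w hw
  obtain ⟨c, hc⟩ := Classical.axiomOfChoice
    (nhhj_aux H hH μ γ hγ E hHJ hcompat' hsymD')
  refine ⟨fun a t => -(c (σ t) a), fun t ht => ?_⟩
  refine ⟨hσ t ht, hcompat (σ t), ?_⟩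
  set q := σ t with hq
  set v : Fin n → ℝ := fun i => partialP H (q, γ q) i with hv
  have hd : HasDerivAt (fun s => γ (σ s)) (fderiv ℝ γ q v) t :=
    ((hγ.differentiable one_ne_zero q).hasFDerivAt).comp_hasDerivAt t (hσ t ht)
  have heq : (fun i => -(partialQ H (q, γ q) i)
      - ∑ a, (-(c q a)) * μ a q i) = fderiv ℝ γ q v := by
    funext i
    have h := hc q i
    have hvv : (fun j => fderiv ℝ H (q, γ q) (0, Pi.single j 1)) = v := rfl
    rw [hvv] at h
    have hpq : partialQ H (q, γ q) i = fderiv ℝ H (q, γ q) (Pi.single i 1, 0) := rfl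
    simp only [neg_mul, Finset.sum_neg_distrib, hpq]
    rw [h]
    ring
  rw [heq]
  exact hd
end

section
/- Let H : ℝⁿ × ℝⁿ → ℝ be continuously differentiable, let μ¹, …, μᵏ : ℝⁿ → ℝⁿ be continuous and linearly independent at every point with constraint distribution D_q = {v : ⟨μᵃ(q), v⟩ = 0 ∀a}, and let Δ : ℝⁿ × ℝⁿ → ℝⁿ × ℝⁿ be a map. Let γₖ, γₗ : ℝⁿ → ℝⁿ be continuously differentiable maps such that for m = k, l: H(q, γₘ(q)) is constant, ∂H/∂p(q, γₘ(q)) ∈ D_q for all q, and ⟨Dγₘ(q)v, w⟩ = ⟨Dγₘ(q)w, v⟩ for all q and v, w ∈ D_q. Let t₀ < t* < t_f and c : (t₀, t_f) → ℝⁿ be continuous, differentiable on (t₀, t*) and (t*, t_f), with c'(t) = ∂H/∂p(c(t), γₖ(c(t))) for t < t*, c'(t) = ∂H/∂p(c(t), γₗ(c(t))) for t > t*, and (c(t*), γₗ(c(t*))) = Δ(c(t*), γₖ(c(t*))). Define x(t) = (c(t), γₖ(c(t))) for t < t* and x(t) = (c(t), γₗ(c(t))) for t ≥ t*. Then on each of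 (t₀, t*) and (t*, t_f) there exist multiplier functions λ₁, …, λₖ such that x satisfies q̇ = ∂H/∂p ∈ D, ṗ = −∂H/∂q − Σₐ λₐ μᵃ(q), and moreover x(t*) = Δ(lim_{t → t*⁻} x(t)). -/
/-- Expansion of a continuous linear functional on a product of pi types. -/
lemma clm_pair_expand {n : ℕ} (L : ((Fin n → ℝ) × (Fin n → ℝ)) →L[ℝ] ℝ)
    (v w : Fin n → ℝ) :
    L (v, w) = (∑ i, v i * L (Pi.single i 1, 0)) + ∑ i, w i * L (0, Pi.single i 1) := by
  have hsingle : ∀ i : Fin n, (fun j => if i = j then (1:ℝ) else 0) = Pi.single i 1 := by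
    intro i; ext j; simp [Pi.single_apply, eq_comm]
  have h1 : (v, w) = ((v, 0) : (Fin n → ℝ) × (Fin n → ℝ)) + (0, w) := by simp
  rw [h1, map_add]
  congr 1
  · have := (L.comp (ContinuousLinearMap.inl ℝ (Fin n → ℝ) (Fin n → ℝ))).toLinearMap.pi_apply_eq_sum_univ v
    simpa [hsingle, smul_eq_mul] using this
  · have := (L.comp (ContinuousLinearMap.inr ℝ (Fin n → ℝ) (Fin n → ℝ))).toLinearMap.pi_apply_eq_sum_univ w
    simpa [hsingle, smul_eq_mul] using this

/-- If `u` is orthogonal to everything orthogonal to all the `w a`, then `u` is a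
linear combination of the `w a`. -/
lemma exists_coeffs {n k : ℕ} (w : Fin k → (Fin n → ℝ)) (u : Fin n → ℝ)
    (h : ∀ v : Fin n → ℝ, (∀ a, ∑ i, w a i * v i = 0) → ∑ i, u i * v i = 0) :
    ∃ c : Fin k → ℝ, u = fun i => ∑ a, c a * w a i := by
  classical
  set e := WithLp.linearEquiv 2 ℝ (Fin n → ℝ) with he
  set w' : Fin k → EuclideanSpace ℝ (Fin n) := fun a => e.symm (w a) with hw'
  set u' : EuclideanSpace ℝ (Fin n) := e.symm u with hu'
  set K := Submodule.span ℝ (Set.range w') with hK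
  have hinner : ∀ x y : EuclideanSpace ℝ (Fin n), (inner ℝ x y : ℝ) = ∑ i, x i * y i := by
    intro x y
    simp [PiLp.inner_apply, RCLike.inner_apply, mul_comm]
  have humem : u' ∈ Kᗮᗮ := by
    rw [Submodule.mem_orthogonal']
    intro v hv
    rw [hinner]
    refine h v fun a => ?_
    have := Submodule.inner_right_of_mem_orthogonal
      (Submodule.subset_span (Set.mem_range_self a)) hv
    rw [hinner] at this
    exact this
  rw [Submodule.orthogonal_orthogonal] at humem
  obtain ⟨c, hc⟩ := (Submodule.mem_span_range_iff_exists_fun ℝ).mp humem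
  refine ⟨c, ?_⟩
  have hce := congrArg e hc
  simp only [map_sum, map_smul] at hce
  have he' : ∀ x : Fin n → ℝ, e (e.symm x) = x := fun x => e.apply_symm_apply x
  rw [he'] at hce
  funext i
  have := congrFun hce i
  simpa [hw', he', smul_eq_mul] using this.symm

/-- Differentiating `H (q, γ q) = E` in direction `v`. -/
lemma hj_deriv {n : ℕ} (H : (Fin n → ℝ) × (Fin n → ℝ) → ℝ) (hH : ContDiff ℝ 1 H)
    (γ : (Fin n → ℝ) → (Fin n → ℝ)) (hγ : ContDiff ℝ 1 γ) (E : ℝ)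
    (hHJ : ∀ q, H (q, γ q) = E) (q v : Fin n → ℝ) :
    (∑ i, v i * partialQ H (q, γ q) i)
      + ∑ i, (fderiv ℝ γ q v) i * partialP H (q, γ q) i = 0 := by
  have hγd : HasFDerivAt γ (fderiv ℝ γ q) q := (hγ.differentiable one_ne_zero q).hasFDerivAt
  have hg : HasFDerivAt (fun q : Fin n → ℝ => (q, γ q))
      ((ContinuousLinearMap.id ℝ (Fin n → ℝ)).prod (fderiv ℝ γ q)) q :=
    HasFDerivAt.prodMk (hasFDerivAt_id q) hγd
  have hHd : HasFDerivAt H (fderiv ℝ H (q, γ q)) (q, γ q) :=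
    (hH.differentiable one_ne_zero _).hasFDerivAt
  have hcomp : HasFDerivAt (fun q : Fin n → ℝ => H (q, γ q))
      ((fderiv ℝ H (q, γ q)).comp
        ((ContinuousLinearMap.id ℝ (Fin n → ℝ)).prod (fderiv ℝ γ q))) q := hHd.comp q hg
  have hconst : HasFDerivAt (fun q : Fin n → ℝ => H (q, γ q)) (0 : (Fin n → ℝ) →L[ℝ] ℝ) q := by
    have heq : (fun q : Fin n → ℝ => H (q, γ q)) = fun _ => E := funext hHJ
    rw [heq]; exact hasFDerivAt_const E q
  have huniq := hcomp.unique hconst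
  have happ := congrArg (fun (L : (Fin n → ℝ) →L[ℝ] ℝ) => L v) huniq
  simp only [ContinuousLinearMap.comp_apply, ContinuousLinearMap.prod_apply,
    ContinuousLinearMap.id_apply, ContinuousLinearMap.zero_apply] at happ
  rw [clm_pair_expand] at happ
  simpa [partialQ, partialP] using happ

/-- The momentum equation with multipliers, for a Hamilton–Jacobi solution `γ`. -/
lemma hj_momentum {n k : ℕ} (H : (Fin n → ℝ) × (Fin n → ℝ) → ℝ) (hH : ContDiff ℝ 1 H)
    (μ : Fin k → (Fin n → ℝ) → (Fin n → ℝ))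
    (γ : (Fin n → ℝ) → (Fin n → ℝ)) (hγ : ContDiff ℝ 1 γ) (E : ℝ)
    (hHJ : ∀ q, H (q, γ q) = E)
    (hcompat : ∀ q, (fun i => partialP H (q, γ q) i) ∈ constraintDist μ q)
    (hsymD : ∀ q, ∀ v ∈ constraintDist μ q, ∀ w ∈ constraintDist μ q,
      ∑ i, fderiv ℝ γ q v i * w i = ∑ i, fderiv ℝ γ q w i * v i) :
    ∃ lamfun : (Fin n → ℝ) → Fin k → ℝ, ∀ q : Fin n → ℝ,
      (fderiv ℝ γ q fun i => partialP H (q, γ q) i)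
        = fun i => -(partialQ H (q, γ q) i) - ∑ a, lamfun q a * μ a q i := by
  classical
  have key : ∀ q : Fin n → ℝ, ∃ cc : Fin k → ℝ,
      (fun i => fderiv ℝ γ q (fun j => partialP H (q, γ q) j) i + partialQ H (q, γ q) i)
        = fun i => ∑ a, cc a * μ a q i := by
    intro q
    apply exists_coeffs
    intro v hv
    have hvD : v ∈ constraintDist μ q := hv
    have hXD : (fun j => partialP H (q, γ q) j) ∈ constraintDist μ q := hcompat q
    have hsym := hsymD q _ hXD v hvD
    have hdir := hj_deriv H hH γ hγ E hHJ q v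
    have expand : ∑ i, (fderiv ℝ γ q (fun j => partialP H (q, γ q) j) i
          + partialQ H (q, γ q) i) * v i
        = (∑ i, fderiv ℝ γ q (fun j => partialP H (q, γ q) j) i * v i)
          + ∑ i, partialQ H (q, γ q) i * v i := by
      rw [← Finset.sum_add_distrib]; exact Finset.sum_congr rfl fun i _ => by ring
    rw [expand, hsym]
    have hcomm : ∑ i, partialQ H (q, γ q) i * v i = ∑ i, v i * partialQ H (q, γ q) i :=
      Finset.sum_congr rfl fun i _ => mul_comm _ _
    rw [hcomm]
    linarith [hdir]
  choose cc hcc using key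
  refine ⟨fun q a => -(cc q a), fun q => ?_⟩
  funext i
  have h1 := congrFun (hcc q) i
  simp only at h1 ⊢
  have h2 : ∑ a, -(cc q a) * μ a q i = -∑ a, cc q a * μ a q i := by
    rw [← Finset.sum_neg_distrib]
    exact Finset.sum_congr rfl fun a _ => by ring
  rw [h2]
  linarith [h1]

/-- Nonholonomic hybrid Hamilton–Jacobi theorem, implication (1) ⟹ (2), for a single
impact: if `γₖ, γₗ` solve the nonholonomic Hamilton–Jacobi problem and are `Δ`-related
at the impact point, then the piecewise lift `x` of a curve `c` tangent to the
projected vector fields satisfies, on each of `(t₀, t*)` and `(t*, t_f)`, the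
nonholonomic Hamilton equations with suitable multipliers, and
`x(t*) = Δ(lim_{t → t*⁻} x(t))`. -/
theorem nonholonomic_hybrid_hamilton_jacobi {n k : ℕ}
    (H : (Fin n → ℝ) × (Fin n → ℝ) → ℝ) (hH : ContDiff ℝ 1 H)
    (μ : Fin k → (Fin n → ℝ) → (Fin n → ℝ))
    (hμcont : ∀ a, Continuous (μ a))
    (hμindep : ∀ q : Fin n → ℝ, LinearIndependent ℝ (fun a : Fin k => μ a q))
    (Δ : (Fin n → ℝ) × (Fin n → ℝ) → (Fin n → ℝ) × (Fin n → ℝ))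
    (γk γl : (Fin n → ℝ) → (Fin n → ℝ))
    (hγk : ContDiff ℝ 1 γk) (hγl : ContDiff ℝ 1 γl)
    (Ek El : ℝ)
    (hHJk : ∀ q : Fin n → ℝ, H (q, γk q) = Ek)
    (hHJl : ∀ q : Fin n → ℝ, H (q, γl q) = El)
    (hcompatk : ∀ q : Fin n → ℝ,
      (fun i => partialP H (q, γk q) i) ∈ constraintDist μ q)
    (hcompatl : ∀ q : Fin n → ℝ,
      (fun i => partialP H (q, γl q) i) ∈ constraintDist μ q)
    (hsymDk : ∀ (q : Fin n → ℝ), ∀ v ∈ constraintDist μ q, ∀ w ∈ constraintDist μ q,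
      ∑ i, fderiv ℝ γk q v i * w i = ∑ i, fderiv ℝ γk q w i * v i)
    (hsymDl : ∀ (q : Fin n → ℝ), ∀ v ∈ constraintDist μ q, ∀ w ∈ constraintDist μ q,
      ∑ i, fderiv ℝ γl q v i * w i = ∑ i, fderiv ℝ γl q w i * v i)
    (t₀ ts t_f : ℝ) (ht₀ : t₀ < ts) (htf : ts < t_f)
    (c : ℝ → (Fin n → ℝ)) (hc : ContinuousOn c (Set.Ioo t₀ t_f))
    (hck : ∀ t ∈ Set.Ioo t₀ ts,
      HasDerivAt c (fun i => partialP H (c t, γk (c t)) i) t)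
    (hcl : ∀ t ∈ Set.Ioo ts t_f,
      HasDerivAt c (fun i => partialP H (c t, γl (c t)) i) t)
    (himpact : (c ts, γl (c ts)) = Δ (c ts, γk (c ts)))
    (x : ℝ → (Fin n → ℝ) × (Fin n → ℝ))
    (hx : ∀ t : ℝ, x t = if t < ts then (c t, γk (c t)) else (c t, γl (c t))) :
    (∃ lam : Fin k → ℝ → ℝ, ∀ t ∈ Set.Ioo t₀ ts,
      HasDerivAt (fun s => (x s).1) (fun i => partialP H (x t) i) t ∧
      (fun i => partialP H (x t) i) ∈ constraintDist μ (c t) ∧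
      HasDerivAt (fun s => (x s).2)
        (fun i => -(partialQ H (x t) i) - ∑ a, lam a t * μ a (c t) i) t) ∧
    (∃ lam : Fin k → ℝ → ℝ, ∀ t ∈ Set.Ioo ts t_f,
      HasDerivAt (fun s => (x s).1) (fun i => partialP H (x t) i) t ∧
      (fun i => partialP H (x t) i) ∈ constraintDist μ (c t) ∧
      HasDerivAt (fun s => (x s).2)
        (fun i => -(partialQ H (x t) i) - ∑ a, lam a t * μ a (c t) i) t) ∧
    (∃ xm : (Fin n → ℝ) × (Fin n → ℝ),
      Filter.Tendsto x (nhdsWithin ts (Set.Iio ts)) (nhds xm) ∧ x ts = Δ xm) := by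
  obtain ⟨lamk, hlamk⟩ := hj_momentum H hH μ γk hγk Ek hHJk hcompatk hsymDk
  obtain ⟨laml, hlaml⟩ := hj_momentum H hH μ γl hγl El hHJl hcompatl hsymDl
  have hx1 : (fun s => (x s).1) = c := by
    funext s; rw [hx s]; split <;> rfl
  refine ⟨⟨fun a t => lamk (c t) a, ?_⟩, ⟨fun a t => laml (c t) a, ?_⟩, ?_⟩
  · intro t ht
    have hxt : x t = (c t, γk (c t)) := by rw [hx t, if_pos ht.2]
    refine ⟨?_, ?_, ?_⟩
    · rw [hx1, hxt]; exact hck t ht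
    · rw [hxt]; exact hcompatk (c t)
    · have hd : HasDerivAt (fun s => γk (c s))
          (fderiv ℝ γk (c t) (fun i => partialP H (c t, γk (c t)) i)) t :=
        (hγk.differentiable one_ne_zero (c t)).hasFDerivAt.comp_hasDerivAt t (hck t ht)
      have heq : (fun s => (x s).2) =ᶠ[nhds t] (fun s => γk (c s)) := by
        filter_upwards [Iio_mem_nhds ht.2] with s hs
        rw [hx s, if_pos (Set.mem_Iio.mp hs)]
      have hd2 := hd.congr_of_eventuallyEq heq
      rw [hxt]
      rw [← hlamk (c t)]
      exact hd2
  · intro t ht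
    have hxt : x t = (c t, γl (c t)) := by rw [hx t, if_neg (not_lt.mpr ht.1.le)]
    refine ⟨?_, ?_, ?_⟩
    · rw [hx1, hxt]; exact hcl t ht
    · rw [hxt]; exact hcompatl (c t)
    · have hd : HasDerivAt (fun s => γl (c s))
          (fderiv ℝ γl (c t) (fun i => partialP H (c t, γl (c t)) i)) t :=
        (hγl.differentiable one_ne_zero (c t)).hasFDerivAt.comp_hasDerivAt t (hcl t ht)
      have heq : (fun s => (x s).2) =ᶠ[nhds t] (fun s => γl (c s)) := by
        filter_upwards [Ioi_mem_nhds ht.1] with s hs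
        rw [hx s, if_neg (not_lt.mpr (Set.mem_Ioi.mp hs).le)]
      have hd2 := hd.congr_of_eventuallyEq heq
      rw [hxt]
      rw [← hlaml (c t)]
      exact hd2
  · refine ⟨(c ts, γk (c ts)), ?_, ?_⟩
    · have hcts : Filter.Tendsto c (nhdsWithin ts (Set.Iio ts)) (nhds (c ts)) := by
        have h1 : ContinuousWithinAt c (Set.Ioo t₀ t_f) ts := hc ts ⟨ht₀, htf⟩
        have h2 : nhdsWithin ts (Set.Iio ts) = nhdsWithin ts (Set.Ioo t₀ ts) :=
          (nhdsWithin_Ioo_eq_nhdsLT ht₀).symm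
        rw [h2]
        exact h1.mono_left (nhdsWithin_mono ts (Set.Ioo_subset_Ioo le_rfl htf.le))
      have hpair : Filter.Tendsto (fun t => (c t, γk (c t)))
          (nhdsWithin ts (Set.Iio ts)) (nhds (c ts, γk (c ts))) :=
        hcts.prodMk_nhds ((hγk.continuous.tendsto (c ts)).comp hcts)
      refine Filter.Tendsto.congr' ?_ hpair
      filter_upwards [self_mem_nhdsWithin] with s hs
      rw [hx s, if_pos (Set.mem_Iio.mp hs)]
    · rw [hx ts, if_neg (lt_irrefl ts)]
      exact himpact
end

section
/- Let m > 0, k > 0, B, a, b, c ∈ ℝ. Consider the Hamiltonian H(x, y, ϑ, pₓ, p_y, p_ϑ) = (pₓ² + p_y²)/(2m) + p_ϑ²/(2mk²) on ℝ³ × ℝ³ and the 1-form γ(x, y, ϑ) = (a, Bmy + b, c). Then γ has symmetric Jacobian (is closed), and the gradient of the function (x, y, ϑ) ↦ H(x, y, ϑ, γ(x, y, ϑ)) equals (0, B·(Bmy + b), 0) at every point; that is, γ solves the forced Hamilton–Jacobi equation d(H ∘ γ) = γ*F for the force 1-form F = B p_y dy, whose pullback along γ is γ*F = B(Bmy + b)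 dy. -/
/-- Rolling disk with dissipation: the separable 1-form `γ = a dx + (Bmy + b) dy + c dϑ`
is closed (symmetric Jacobian) and solves the forced Hamilton–Jacobi equation
`d(H ∘ γ) = γ*F` for the mechanical Hamiltonian
`H = (pₓ² + p_y²)/(2m) + p_ϑ²/(2mk²)` and the force `F = B p_y dy`, whose pullback
along `γ` is `γ*F = B(Bmy + b) dy`: the gradient of `(x, y, ϑ) ↦ H(x, y, ϑ, γ(x,y,ϑ))`
is `(0, B(Bmy + b), 0)` at every point. -/
theorem rolling_disk_forced_hamilton_jacobi
    (m k B a b c : ℝ) (hm : 0 < m) (hk : 0 < k)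
    (H : (Fin 3 → ℝ) × (Fin 3 → ℝ) → ℝ)
    (hHdef : ∀ x : (Fin 3 → ℝ) × (Fin 3 → ℝ),
      H x = (x.2 0 ^ 2 + x.2 1 ^ 2) / (2 * m) + x.2 2 ^ 2 / (2 * m * k ^ 2))
    (γ : (Fin 3 → ℝ) → (Fin 3 → ℝ))
    (hγdef : ∀ q : Fin 3 → ℝ, γ q = ![a, B * m * q 1 + b, c]) :
    (∀ (q : Fin 3 → ℝ) (i j : Fin 3),
      fderiv ℝ γ q (Pi.single j 1) i = fderiv ℝ γ q (Pi.single i 1) j) ∧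
    (∀ q : Fin 3 → ℝ,
      fderiv ℝ (fun q => H (q, γ q)) q (Pi.single 0 1) = 0 ∧
      fderiv ℝ (fun q => H (q, γ q)) q (Pi.single 1 1) = B * (B * m * q 1 + b) ∧
      fderiv ℝ (fun q => H (q, γ q)) q (Pi.single 2 1) = 0) := by
  have hγ : γ = fun q => ![a, B * m * q 1 + b, c] := funext hγdef
  subst hγ
  have hproj : ∀ q : Fin 3 → ℝ, HasFDerivAt (fun q : Fin 3 → ℝ => q 1)
      (ContinuousLinearMap.proj 1 : (Fin 3 → ℝ) →L[ℝ] ℝ) q := fun q => hasFDerivAt_apply (𝕜 := ℝ) 1 q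
  have hD : ∀ q : Fin 3 → ℝ, HasFDerivAt (fun q : Fin 3 → ℝ => ![a, B * m * q 1 + b, c])
      (ContinuousLinearMap.pi ![0, (B * m) • ContinuousLinearMap.proj 1, 0] : (Fin 3 → ℝ) →L[ℝ] (Fin 3 → ℝ)) q := by
    intro q
    apply hasFDerivAt_pi''
    intro i
    fin_cases i <;> simp
    · exact hasFDerivAt_const a q
    · exact (hproj q).const_mul (B * m)
    · exact hasFDerivAt_const c q
  constructor
  · intro q i j
    rw [(hD q).fderiv]
    fin_cases i <;> fin_cases j <;>
      simp [ContinuousLinearMap.pi_apply, Pi.single_apply]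
  · intro q
    have hg : HasFDerivAt (fun q : Fin 3 → ℝ => H (q, ![a, B * m * q 1 + b, c]))
        ((B * (B * m * q 1 + b)) • (ContinuousLinearMap.proj 1 : (Fin 3 → ℝ) →L[ℝ] ℝ)) q := by
      have : (fun q : Fin 3 → ℝ => H (q, ![a, B * m * q 1 + b, c])) =
          fun q : Fin 3 → ℝ => (a ^ 2 + (B * m * q 1 + b) * (B * m * q 1 + b)) * (2 * m)⁻¹ + c ^ 2 / (2 * m * k ^ 2) := by
        funext q; rw [hHdef]; simp; ring
      rw [this]
      have h1 : HasFDerivAt (fun q : Fin 3 → ℝ => B * m * q 1 + b)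
          ((B * m) • ContinuousLinearMap.proj 1 : (Fin 3 → ℝ) →L[ℝ] ℝ) q :=
        ((hproj q).const_mul (B * m)).add_const b
      have h2 := (((h1.mul h1).const_add (a ^ 2)).mul_const ((2 * m)⁻¹)).add_const (c ^ 2 / (2 * m * k ^ 2))
      refine h2.congr_fderiv ?_
      ext v
      simp [ContinuousLinearMap.smul_apply]
      field_simp
      ring
    rw [hg.fderiv]
    refine ⟨?_, ?_, ?_⟩ <;> simp [Pi.single_apply]
end

section
/- Let E ≥ 0 and λ ∈ ℝ with λ² ≤ 2E, and let s ∈ {+1, −1}. Define γ : ℝ³ → ℝ³ by γ(x, y, z) = (λ/√(1+y²), s·√(2E − λ²), λy/√(1+y²)). Then: (i) ½(γ₁² + γ₂² + γ₃²)(x, y, z) = E for all (x, y, z), i.e. H ∘ γ = E for H(q, p) = ½|p|²; (ii) γ₃ = y·γ₁ everywhere, so the image of γ lies in the constraint codistribution M = span{dx + y dz, dy}; and (iii) (1 + y²)·(d/dy)[λ/√(1+y²)] + y·(λ/√(1+y²)) = 0 for all y, which is the condition that dγ vanishes on pairs of vectors in the constraint distribution D = span{∂/∂x + y ∂/∂z,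 ∂/∂y}. Hence γ is a solution of the nonholonomic Hamilton–Jacobi equation for the nonholonomic particle. -/
open Real

theorem sq_div_sqrt_one_add_sq_add_sq_mul_div (l y : ℝ) :
    (l / √(1 + y ^ 2)) ^ 2 + (l * y / √(1 + y ^ 2)) ^ 2 = l ^ 2 := by
  have hpos : 0 < 1 + y ^ 2 := by positivity
  rw [div_pow, div_pow, sq_sqrt hpos.le]
  field_simp

theorem hasDerivAt_div_sqrt_one_add_sq (l y : ℝ) :
    HasDerivAt (fun y : ℝ => l / √(1 + y ^ 2)) (-(y * (l / √(1 + y ^ 2))) / (1 + y ^ 2)) y := by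
  have hpos : 0 < 1 + y ^ 2 := by positivity
  have hsqrt : HasDerivAt (fun y : ℝ => √(1 + y ^ 2)) (y / √(1 + y ^ 2)) y := by
    convert ((hasDerivAt_pow 2 y).const_add 1).sqrt hpos.ne' using 1
    field_simp
    ring
  refine ((hasDerivAt_const y l).div hsqrt (sqrt_pos.mpr hpos).ne').congr_deriv ?_
  rw [sq_sqrt hpos.le]
  field_simp
  ring

theorem nonholonomic_particle_hamilton_jacobi_solution_general
    (E l s : ℝ) (hl : l ^ 2 ≤ 2 * E) (hs : s = 1 ∨ s = -1)
    (γ : (Fin 3 → ℝ) → (Fin 3 → ℝ))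
    (hγdef : ∀ q : Fin 3 → ℝ,
      γ q = ![l / Real.sqrt (1 + q 1 ^ 2),
              s * Real.sqrt (2 * E - l ^ 2),
              l * q 1 / Real.sqrt (1 + q 1 ^ 2)]) :
    (∀ q : Fin 3 → ℝ,
      (1 / 2) * ((γ q 0) ^ 2 + (γ q 1) ^ 2 + (γ q 2) ^ 2) = E) ∧
    (∀ q : Fin 3 → ℝ, γ q 2 = q 1 * γ q 0) ∧
    (∀ y : ℝ,
      (1 + y ^ 2) * deriv (fun y : ℝ => l / Real.sqrt (1 + y ^ 2)) y
        + y * (l / Real.sqrt (1 + y ^ 2)) = 0) := by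
  refine ⟨fun q => ?_, fun q => ?_, fun y => ?_⟩
  · have hs_sq : s ^ 2 = 1 := by rcases hs with rfl | rfl <;> norm_num
    have hmomentum : (s * √(2 * E - l ^ 2)) ^ 2 = 2 * E - l ^ 2 := by
      rw [mul_pow, hs_sq, one_mul, sq_sqrt (by linarith)]
    simp only [hγdef, Matrix.cons_val_zero, Matrix.cons_val_one, Matrix.cons_val_two,
      Matrix.head_cons, Matrix.tail_cons]
    linarith [sq_div_sqrt_one_add_sq_add_sq_mul_div l (q 1)]
  · simp only [hγdef, Matrix.cons_val_zero, Matrix.cons_val_two, Matrix.tail_cons,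
      Matrix.head_cons]
    ring
  · rw [(hasDerivAt_div_sqrt_one_add_sq l y).deriv]
    field_simp
    ring

/-- The nonholonomic particle: the 1-form
`γ = (λ/√(1+y²)) dx ± √(2E − λ²) dy + (λy/√(1+y²)) dz` solves the nonholonomic
Hamilton–Jacobi problem for `H = ½|p|²` with constraint distribution
`D = span{∂/∂x + y ∂/∂z, ∂/∂y}`: it has constant energy `E`, its image lies in the
codistribution `M = span{dx + y dz, dy}` (i.e. `γ₃ = y γ₁`), and the closedness
condition `(1+y²) γₓ'(y) + y γₓ(y) = 0` on `D × D` holds. -/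
theorem nonholonomic_particle_hamilton_jacobi_solution
    (E l s : ℝ) (hE : 0 ≤ E) (hl : l ^ 2 ≤ 2 * E) (hs : s = 1 ∨ s = -1)
    (γ : (Fin 3 → ℝ) → (Fin 3 → ℝ))
    (hγdef : ∀ q : Fin 3 → ℝ,
      γ q = ![l / Real.sqrt (1 + q 1 ^ 2),
              s * Real.sqrt (2 * E - l ^ 2),
              l * q 1 / Real.sqrt (1 + q 1 ^ 2)]) :
    (∀ q : Fin 3 → ℝ,
      (1 / 2) * ((γ q 0) ^ 2 + (γ q 1) ^ 2 + (γ q 2) ^ 2) = E) ∧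
    (∀ q : Fin 3 → ℝ, γ q 2 = q 1 * γ q 0) ∧
    (∀ y : ℝ,
      (1 + y ^ 2) * deriv (fun y : ℝ => l / Real.sqrt (1 + y ^ 2)) y
        + y * (l / Real.sqrt (1 + y ^ 2)) = 0) :=
  nonholonomic_particle_hamilton_jacobi_solution_general E l s hl hs γ hγdef
end

section
/- Let λ ∈ ℝ, A ≠ 0, and x₀, y₀, z₀ ∈ ℝ. Define, for t ∈ ℝ, y(t) = A t + y₀, x(t) = (λ/A)·(arsinh(A t + y₀) − arsinh(y₀)) + x₀, and z(t) = (λ/A)·(√((A t + y₀)² + 1) − √(y₀² + 1)) + z₀. Then for all t: x'(t) = λ/√(1 + y(t)²), y'(t) = A, and z'(t) = λ·y(t)/√(1 + y(t)²). That is, (x, y, z) is an integral curve of the projected vector field X_H^γ of the nonholonomic particle with the Hamilton–Jacobi solution γ = (λ/√(1+y²), A, λy/√(1+y²)). -/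
/-! With `u = A t + y₀`, both `x` and `z` are `(λ / A) · F(u)` up to additive constants, for
`F = arsinh` and `F = √(· ² + 1)`. The chain rule produces a factor `A` that cancels `1 / A`,
leaving `λ · F'(u)`, and `F'(u)` is `1 / √(1 + u²)`, resp. `u / √(1 + u²)`. -/

open Real

theorem HasDerivAt.div_mul_comp_affine_sub_add {𝕜 : Type*} [NontriviallyNormedField 𝕜]
    {f : 𝕜 → 𝕜} {f' a b t : 𝕜} (c k m : 𝕜) (ha : a ≠ 0) (hf : HasDerivAt f f' (a * t + b)) :
    HasDerivAt (fun s => c / a * (f (a * s + b) - k) + m) (c * f') t := by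
  have haffine : HasDerivAt (fun s => a * s + b) a t := by
    simpa using ((hasDerivAt_id t).const_mul a).add_const b
  exact (((hf.comp t haffine).sub_const k).const_mul (c / a)).add_const m
    |>.congr_deriv (by field_simp)

theorem Real.hasDerivAt_sqrt_sq_add_one (u : ℝ) :
    HasDerivAt (fun v => √(v ^ 2 + 1)) (u / √(1 + u ^ 2)) u := by
  refine (((hasDerivAt_pow 2 u).add_const 1).sqrt (by positivity)).congr_deriv ?_
  rw [add_comm (u ^ 2)]
  norm_num
  field_simp

/-- Explicit integral curves of the projected vector field `X_H^γ` of the nonholonomic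
particle: with `y(t) = At + y₀`,
`x(t) = (λ/A)(arsinh(At + y₀) − arsinh y₀) + x₀` and
`z(t) = (λ/A)(√((At + y₀)² + 1) − √(y₀² + 1)) + z₀`, one has
`x' = λ/√(1 + y²)`, `y' = A`, and `z' = λ y/√(1 + y²)`. -/
theorem nonholonomic_particle_integral_curves
    (l A x₀ y₀ z₀ : ℝ) (hA : A ≠ 0)
    (x y z : ℝ → ℝ)
    (hy : ∀ t, y t = A * t + y₀)
    (hx : ∀ t, x t = (l / A) * (Real.arsinh (A * t + y₀) - Real.arsinh y₀) + x₀)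
    (hz : ∀ t, z t = (l / A) *
      (Real.sqrt ((A * t + y₀) ^ 2 + 1) - Real.sqrt (y₀ ^ 2 + 1)) + z₀) :
    ∀ t : ℝ,
      HasDerivAt x (l / Real.sqrt (1 + y t ^ 2)) t ∧
      HasDerivAt y A t ∧
      HasDerivAt z (l * y t / Real.sqrt (1 + y t ^ 2)) t := by
  obtain rfl := funext hy
  obtain rfl := funext hx
  obtain rfl := funext hz
  intro t
  refine ⟨?_, ?_, ?_⟩
  · simpa only [div_eq_mul_inv] using
      (hasDerivAt_arsinh _).div_mul_comp_affine_sub_add l (arsinh y₀) x₀ hA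
  · simpa using ((hasDerivAt_id t).const_mul A).add_const y₀
  · simpa only [mul_div_assoc] using
      (hasDerivAt_sqrt_sq_add_one _).div_mul_comp_affine_sub_add l (√(y₀ ^ 2 + 1)) z₀ hA
end

section
/- Let e ∈ ℝ, and let λ⁻, λ⁺, E⁻, E⁺ ∈ ℝ with 2E⁻ ≥ (λ⁻)² and 2E⁺ ≥ (λ⁺)². Suppose λ⁺ = λ⁻ and √(2E⁺ − (λ⁺)²) = e·√(2E⁻ − (λ⁻)²) (the Δ_H-relatedness conditions for the nonholonomic particle impacting a wall with elastic constant e). Then λ⁺ = λ⁻ and E⁺ = e²·E⁻ + ((1 − e²)/2)·(λ⁻)². In particular, fixing (λ⁻, E⁻) determines (λ⁺, E⁺), so the family of Hamilton–Jacobi solutions γ_{(λ, E)} is a complete solution and the hybrid nonholonomic particle is an integrable nonholonomic hybrid system. -/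
/-- The Δ_H-relatedness conditions for the nonholonomic particle impacting a wall with
elastic constant `e` determine the post-impact parameters: if `λ⁺ = λ⁻` and
`√(2E⁺ − (λ⁺)²) = e √(2E⁻ − (λ⁻)²)`, then `λ⁺ = λ⁻` and
`E⁺ = e² E⁻ + ((1 − e²)/2)(λ⁻)²`. Hence the pre-impact parameters `(λ⁻, E⁻)` determine
the post-impact parameters `(λ⁺, E⁺)`, and the family `γ_{(λ,E)}` is a complete
solution, making the hybrid nonholonomic particle integrable. -/
theorem nonholonomic_particle_impact_parameters
    (e lm lp Em Ep : ℝ)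
    (hm : lm ^ 2 ≤ 2 * Em) (hp : lp ^ 2 ≤ 2 * Ep)
    (h1 : lp = lm)
    (h2 : Real.sqrt (2 * Ep - lp ^ 2) = e * Real.sqrt (2 * Em - lm ^ 2)) :
    lp = lm ∧ Ep = e ^ 2 * Em + ((1 - e ^ 2) / 2) * lm ^ 2 := by
  refine ⟨h1, ?_⟩
  have h3 : 2 * Ep - lp ^ 2 = e ^ 2 * (2 * Em - lm ^ 2) := by
    have := congrArg (· ^ 2) h2
    simpa [Real.sq_sqrt (by linarith : (0:ℝ) ≤ 2 * Ep - lp ^ 2),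
      Real.sq_sqrt (by linarith : (0:ℝ) ≤ 2 * Em - lm ^ 2), mul_pow] using this
  subst h1
  linarith
end

section
/- Let a₁, a₂, a₃ > 0, let μ₁, μ₂, μ₃ ∈ ℝ with μ₂² + μ₃² > 0, let E ∈ ℝ and λ₁ ∈ ℝ satisfy 2E(μ₂² + μ₃²) − λ₁²a₁²(μ₁² + μ₂² + μ₃²) ≥ 0, and let λ₂ = ±√(2E(μ₂² + μ₃²) − λ₁²a₁²(μ₁² + μ₂² + μ₃²)). Define γ₁ = λ₁, γ₂ = (μ₃λ₂ − μ₁μ₂a₁λ₁)/(a₂(μ₂² + μ₃²)), and γ₃ = (−μ₂λ₂ − μ₁μ₃a₁λ₁)/(a₃(μ₂² + μ₃²)). Then a₁²γ₁² + a₂²γ₂² + a₃²γ₃² = 2E and a₁γ₁μ₁ + a₂γ₂μ₂ + a₃γ₃μ₃ = 0. That is, the constant 1-form γ = γ₁e¹ + γ₂e² + γ₃e³ solves the nonholonomic Hamilton–Jacobi equations of the constrained generalized rigid body on SO(3). -/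
/-- The constrained generalized rigid body on SO(3): the constant 1-form with
components `γ₁ = λ₁`, `γ₂ = (μ₃λ₂ − μ₁μ₂a₁λ₁)/(a₂(μ₂² + μ₃²))`,
`γ₃ = (−μ₂λ₂ − μ₁μ₃a₁λ₁)/(a₃(μ₂² + μ₃²))`, where
`λ₂ = ±√(2E(μ₂² + μ₃²) − λ₁²a₁²(μ₁² + μ₂² + μ₃²))`, solves the nonholonomic
Hamilton–Jacobi equations: `a₁²γ₁² + a₂²γ₂² + a₃²γ₃² = 2E` (constant energy) and
`a₁γ₁μ₁ + a₂γ₂μ₂ + a₃γ₃μ₃ = 0` (membership in the constraint momentum set `M_μ`). -/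
theorem rigid_body_nonholonomic_hamilton_jacobi
    (a₁ a₂ a₃ μ₁ μ₂ μ₃ E lam₁ lam₂ : ℝ)
    (ha₁ : 0 < a₁) (ha₂ : 0 < a₂) (ha₃ : 0 < a₃)
    (hμ : 0 < μ₂ ^ 2 + μ₃ ^ 2)
    (hD : 0 ≤ 2 * E * (μ₂ ^ 2 + μ₃ ^ 2)
      - lam₁ ^ 2 * a₁ ^ 2 * (μ₁ ^ 2 + μ₂ ^ 2 + μ₃ ^ 2))
    (hlam₂ : lam₂ = Real.sqrt (2 * E * (μ₂ ^ 2 + μ₃ ^ 2)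
        - lam₁ ^ 2 * a₁ ^ 2 * (μ₁ ^ 2 + μ₂ ^ 2 + μ₃ ^ 2)) ∨
      lam₂ = -Real.sqrt (2 * E * (μ₂ ^ 2 + μ₃ ^ 2)
        - lam₁ ^ 2 * a₁ ^ 2 * (μ₁ ^ 2 + μ₂ ^ 2 + μ₃ ^ 2)))
    (γ₁ γ₂ γ₃ : ℝ)
    (hγ₁ : γ₁ = lam₁)
    (hγ₂ : γ₂ = (μ₃ * lam₂ - μ₁ * μ₂ * a₁ * lam₁) / (a₂ * (μ₂ ^ 2 + μ₃ ^ 2)))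
    (hγ₃ : γ₃ = (-(μ₂ * lam₂) - μ₁ * μ₃ * a₁ * lam₁) / (a₃ * (μ₂ ^ 2 + μ₃ ^ 2))) :
    a₁ ^ 2 * γ₁ ^ 2 + a₂ ^ 2 * γ₂ ^ 2 + a₃ ^ 2 * γ₃ ^ 2 = 2 * E ∧
    a₁ * γ₁ * μ₁ + a₂ * γ₂ * μ₂ + a₃ * γ₃ * μ₃ = 0 := by
  have hsq : lam₂ ^ 2 = 2 * E * (μ₂ ^ 2 + μ₃ ^ 2)
      - lam₁ ^ 2 * a₁ ^ 2 * (μ₁ ^ 2 + μ₂ ^ 2 + μ₃ ^ 2) := by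
    rcases hlam₂ with h | h <;> rw [h] <;>
      simp [neg_pow, Real.sq_sqrt hD]
  have hμ' : μ₂ ^ 2 + μ₃ ^ 2 ≠ 0 := ne_of_gt hμ
  subst hγ₁ hγ₂ hγ₃
  constructor
  · field_simp
    linear_combination (μ₂^2+μ₃^2) * hsq
  · field_simp
    ring
end

section
/- Let ε, μ₁, μ₂, μ₃, I₁₁ ∈ ℝ with μ₂ ≠ 0, μ₃ ≠ 0, and I₁₁ ≠ 0. If ε = 1 or μ₃ = μ₂ or μ₃ = −μ₂, then for every (λ₁⁻, λ₂⁻) ∈ ℝ² there exists (λ₁⁺, λ₂⁺) ∈ ℝ² satisfying simultaneously: λ₁⁺ = ε λ₁⁻, λ₂⁺ = λ₂⁻ + (ε − 1)·(μ₁μ₂/(μ₃ I₁₁))·λ₁⁻, and λ₂⁺ = λ₂⁻ + (ε − 1)·(μ₁μ₃/(μ₂ I₁₁))·λ₁⁻. Consequently, the Δ_H-relatedness equations of the constrained rigid body hybrid system are solvable, and the system is an integrable nonholonomic hybrid Hamiltonian system when μ = (μ₁, μ₂, ±μ₂) or when the impact map is the canonical inclusion (ε = 1). -/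
/-- Integrability of the constrained rigid body hybrid system: if `ε = 1` or
`μ₃ = ±μ₂`, then for every pre-impact parameter pair `(λ₁⁻, λ₂⁻)` there is a
post-impact pair `(λ₁⁺, λ₂⁺)` satisfying the Δ_H-relatedness equations
`λ₁⁺ = ελ₁⁻`, `λ₂⁺ = λ₂⁻ + (ε − 1)μ₁μ₂λ₁⁻/(μ₃I₁₁)`, and
`λ₂⁺ = λ₂⁻ + (ε − 1)μ₁μ₃λ₁⁻/(μ₂I₁₁)`; hence the system is an integrable
nonholonomic hybrid Hamiltonian system. -/
theorem rigid_body_hybrid_integrable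
    (ε μ₁ μ₂ μ₃ I₁₁ : ℝ) (hμ₂ : μ₂ ≠ 0) (hμ₃ : μ₃ ≠ 0) (hI : I₁₁ ≠ 0)
    (h : ε = 1 ∨ μ₃ = μ₂ ∨ μ₃ = -μ₂) :
    ∀ lam₁m lam₂m : ℝ, ∃ lam₁p lam₂p : ℝ,
      lam₁p = ε * lam₁m ∧
      lam₂p = lam₂m + (ε - 1) * (μ₁ * μ₂ / (μ₃ * I₁₁)) * lam₁m ∧
      lam₂p = lam₂m + (ε - 1) * (μ₁ * μ₃ / (μ₂ * I₁₁)) * lam₁m := by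
  intro lam₁m lam₂m
  refine ⟨ε * lam₁m, lam₂m + (ε - 1) * (μ₁ * μ₂ / (μ₃ * I₁₁)) * lam₁m, rfl, rfl, ?_⟩
  rcases h with h | h | h
  · simp [h]
  · rw [h]
  · rw [h]; field_simp
end
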